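/- arXiv:1211.2923 — 7 statements merged into one kernel-verified Lean document; each statement's English description precedes it below -/
import Mathlib

section
/- Let (a_1,...,a_s) and (b_1,...,b_s) be weakly increasing tuples of nonnegative integers with the same total sum, satisfying Σ_{j≤i} a_j ≤ Σ_{j≤i} b_j for all 1 ≤ i ≤ s, with strict inequality for some i < s. Then for any nonnegative integer c, the sorted (s+1)-tuples obtained by inserting c satisfy r_i(a_1,...,a_s,c) ≤ r_i(b_1,...,b_s,c) for all 1 ≤ i ≤ s+1, i.e., the sum of the i smallest entries of (a_1,...,a_s,c) is at most the sum of the i smallest entries of (b_1,...,b_s,c), with strict inequality for some i < s+1. -/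
/-- Sum of the `ℓ` smallest entries: minimum over `ℓ`-element subsets of the
sum of the selected entries. -/
noncomputable def rmin {m : ℕ} (a : Fin m → ℕ) (ℓ : ℕ) : ℕ :=
  sInf {x : ℕ | ∃ S : Finset (Fin m), S.card = ℓ ∧ x = ∑ i ∈ S, a i}

/-!
For a weakly increasing tuple `a` the `ℓ` smallest entries are the first `ℓ`, so `r_ℓ` is
the prefix sum `P_a ℓ`, and inserting an entry `c` gives
`r_{ℓ+1} = min (P_a (ℓ+1)) (P_a ℓ + c)`. The weak inequalities are therefore inherited from
those of the prefix sums. If `P_a (ℓ+1) < P_b (ℓ+1)`, then either `c ≥ b_ℓ`, the minimum for `b`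
at `ℓ+1` is `P_b (ℓ+1)` and the inequality stays strict there, or `c < b_ℓ ≤ b_{ℓ+1}`, the
minimum for `b` at `ℓ+2` is `P_b (ℓ+1) + c` and the inequality is strict at `ℓ+2`.
-/

open Finset

theorem Fin.val_le_orderEmbedding {k m : ℕ} (f : Fin k ↪o Fin m) (j : Fin k) :
    (j : ℕ) ≤ f j := by
  have h : (Iio j).map f.toEmbedding ⊆ Iio (f j) := by
    intro x
    simp only [mem_map, mem_Iio, RelEmbedding.coe_toEmbedding]
    rintro ⟨y, hy, rfl⟩
    exact f.strictMono hy
  simpa using card_le_card h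

theorem Finset.exists_eq_map_castSuccEmb {m : ℕ} (S : Finset (Fin (m + 1))) :
    ∃ T : Finset (Fin m),
      S = T.map Fin.castSuccEmb ∨ S = insert (Fin.last m) (T.map Fin.castSuccEmb) := by
  refine ⟨univ.filter (fun i => Fin.castSucc i ∈ S), ?_⟩
  by_cases hS : Fin.last m ∈ S
  · right
    ext x
    induction x using Fin.lastCases <;> simp [hS, Fin.castSucc_ne_last]
  · left
    ext x
    induction x using Fin.lastCases <;> simp [hS]

section rmin

variable {m : ℕ}

def prefixSum (a : Fin m → ℕ) (ℓ : ℕ) : ℕ :=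
  ∑ j ∈ univ.filter (fun j : Fin m => (j : ℕ) < ℓ), a j

theorem prefixSum_succ (a : Fin m → ℕ) {ℓ : ℕ} (h : ℓ < m) :
    prefixSum a (ℓ + 1) = prefixSum a ℓ + a ⟨ℓ, h⟩ := by
  have : univ.filter (fun j : Fin m => (j : ℕ) < ℓ + 1)
      = insert ⟨ℓ, h⟩ (univ.filter fun j : Fin m => (j : ℕ) < ℓ) := by
    ext j
    simp only [mem_filter, mem_univ, true_and, mem_insert, Fin.ext_iff]
    omega
  rw [prefixSum, prefixSum, this, sum_insert (by simp), add_comm]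

theorem prefixSum_le_sum {a : Fin m → ℕ} (ha : Monotone a) (S : Finset (Fin m)) :
    prefixSum a #S ≤ ∑ i ∈ S, a i := by
  set e := S.orderEmbOfFin rfl
  have hk : #S ≤ m := by simpa using S.card_le_univ
  have hS : ∑ i ∈ S, a i = ∑ j : Fin #S, a (e j) := by
    conv_lhs => rw [← S.map_orderEmbOfFin_univ rfl, sum_map]
    rfl
  have hP : prefixSum a #S = ∑ j : Fin #S, a (Fin.castLE hk j) := by
    have : univ.filter (fun j : Fin m => (j : ℕ) < #S) = univ.map (Fin.castLEEmb hk) := by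
      ext j
      simp only [mem_filter, mem_univ, true_and, mem_map, Fin.castLEEmb_apply]
      exact ⟨fun hj => ⟨⟨j, hj⟩, rfl⟩, by rintro ⟨x, rfl⟩; exact x.isLt⟩
    rw [prefixSum, this, sum_map]
    rfl
  rw [hS, hP]
  exact sum_le_sum fun j _ => ha (Fin.val_le_orderEmbedding e j)

theorem rmin_le_sum (a : Fin m → ℕ) (S : Finset (Fin m)) : rmin a #S ≤ ∑ i ∈ S, a i :=
  Nat.sInf_le ⟨S, rfl, rfl⟩

theorem exists_rmin_eq_sum (a : Fin m → ℕ) {ℓ : ℕ} (h : ℓ ≤ m) :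
    ∃ S : Finset (Fin m), #S = ℓ ∧ rmin a ℓ = ∑ i ∈ S, a i := by
  obtain ⟨S, -, hS⟩ := exists_subset_card_eq (s := (univ : Finset (Fin m))) (by simpa)
  exact Nat.sInf_mem (s := {x | ∃ S : Finset (Fin m), #S = ℓ ∧ x = ∑ i ∈ S, a i})
    ⟨_, S, hS, rfl⟩

theorem rmin_zero (a : Fin m → ℕ) : rmin a 0 = 0 :=
  Nat.le_zero.mp (by simpa using rmin_le_sum a ∅)

theorem rmin_univ (a : Fin m → ℕ) : rmin a m = ∑ i, a i := by
  obtain ⟨S, hS, h⟩ := exists_rmin_eq_sum a le_rfl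
  rwa [eq_univ_of_card S (by simpa using hS)] at h

theorem rmin_eq_prefixSum {a : Fin m → ℕ} (ha : Monotone a) {ℓ : ℕ} (h : ℓ ≤ m) :
    rmin a ℓ = prefixSum a ℓ := by
  refine le_antisymm ?_ ?_
  · have := rmin_le_sum a (univ.filter fun j : Fin m => (j : ℕ) < ℓ)
    rwa [Fin.card_filter_val_lt, min_eq_right h] at this
  · obtain ⟨S, rfl, hS⟩ := exists_rmin_eq_sum a h
    exact hS ▸ prefixSum_le_sum ha S

theorem sum_map_castSuccEmb_snoc (a : Fin m → ℕ) (c : ℕ) (T : Finset (Fin m)) :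
    ∑ i ∈ T.map Fin.castSuccEmb, Fin.snoc a c i = ∑ i ∈ T, a i := by
  simp

theorem sum_insert_last_snoc (a : Fin m → ℕ) (c : ℕ) (T : Finset (Fin m)) :
    ∑ i ∈ insert (Fin.last m) (T.map Fin.castSuccEmb), Fin.snoc a c i =
      ∑ i ∈ T, a i + c := by
  rw [sum_insert (by simp [Fin.castSucc_ne_last]), sum_map_castSuccEmb_snoc, Fin.snoc_last,
    add_comm]

-- `ℓ < m` is needed: `rmin a (ℓ + 1)` is `sInf ∅ = 0` when `ℓ = m`.
theorem rmin_snoc (a : Fin m → ℕ) (c : ℕ) {ℓ : ℕ} (h : ℓ < m) :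
    rmin (Fin.snoc a c) (ℓ + 1) = min (rmin a (ℓ + 1)) (rmin a ℓ + c) := by
  refine le_antisymm (le_min ?_ ?_) ?_
  · obtain ⟨T, hT, hsum⟩ := exists_rmin_eq_sum a h
    simpa [hsum, hT] using rmin_le_sum (Fin.snoc a c) (T.map Fin.castSuccEmb)
  · obtain ⟨T, hT, hsum⟩ := exists_rmin_eq_sum a h.le
    have := rmin_le_sum (Fin.snoc a c) (insert (Fin.last m) (T.map Fin.castSuccEmb))
    rwa [card_insert_of_notMem (by simp [Fin.castSucc_ne_last]), card_map, hT,
      sum_insert_last_snoc, ← hsum] at this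
  · obtain ⟨S, hS, hsum⟩ := exists_rmin_eq_sum (Fin.snoc a c) (Nat.succ_le_succ h.le)
    obtain ⟨T, rfl | rfl⟩ := S.exists_eq_map_castSuccEmb
    · rw [hsum, sum_map_castSuccEmb_snoc]
      rw [card_map] at hS
      exact min_le_of_left_le (hS ▸ rmin_le_sum a T :)
    · rw [hsum, sum_insert_last_snoc]
      rw [card_insert_of_notMem (by simp [Fin.castSucc_ne_last]), card_map] at hS
      exact min_le_of_right_le
        (Nat.add_le_add_right (Nat.succ_injective hS ▸ rmin_le_sum a T :) c)

theorem rmin_snoc_last (a : Fin m → ℕ) (c : ℕ) :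
    rmin (Fin.snoc a c) (m + 1) = ∑ i, a i + c := by
  simp [rmin_univ, Fin.sum_univ_castSucc]

end rmin

section Majorization

variable {s : ℕ} {a b : Fin s → ℕ}

theorem rmin_snoc_of_monotone (ha : Monotone a) (c : ℕ) {ℓ : ℕ} (h : ℓ < s) :
    rmin (Fin.snoc a c) (ℓ + 1) = min (prefixSum a (ℓ + 1)) (prefixSum a ℓ + c) := by
  rw [rmin_snoc a c h, rmin_eq_prefixSum ha h, rmin_eq_prefixSum ha h.le]

theorem rmin_snoc_le_rmin_snoc (ha : Monotone a) (hb : Monotone b)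
    (hsum : ∑ i, a i = ∑ i, b i) (hpartial : ∀ i ≤ s, prefixSum a i ≤ prefixSum b i)
    (c : ℕ) {i : ℕ} (hi : i ≤ s + 1) :
    rmin (Fin.snoc a c) i ≤ rmin (Fin.snoc b c) i := by
  rcases i with _ | ℓ
  · simp [rmin_zero]
  obtain hℓ | rfl := (Nat.le_of_succ_le_succ hi).lt_or_eq
  · rw [rmin_snoc_of_monotone ha c hℓ, rmin_snoc_of_monotone hb c hℓ]
    exact min_le_min (hpartial _ hℓ) (Nat.add_le_add_right (hpartial _ hℓ.le) c)
  · rw [rmin_snoc_last, rmin_snoc_last, hsum]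

theorem exists_rmin_snoc_lt (ha : Monotone a) (hb : Monotone b) (c : ℕ) {ℓ : ℕ}
    (h : ℓ + 1 < s) (hlt : prefixSum a (ℓ + 1) < prefixSum b (ℓ + 1)) :
    ∃ i, 1 ≤ i ∧ i < s + 1 ∧ rmin (Fin.snoc a c) i < rmin (Fin.snoc b c) i := by
  have hb₁ := prefixSum_succ b (ℓ := ℓ) (by omega)
  have hb₂ := prefixSum_succ b h
  have hmono : b ⟨ℓ, by omega⟩ ≤ b ⟨ℓ + 1, h⟩ := hb (Fin.mk_le_mk.mpr ℓ.le_succ)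
  by_cases hc : b ⟨ℓ, by omega⟩ ≤ c
  · refine ⟨ℓ + 1, by omega, by omega, ?_⟩
    rw [rmin_snoc_of_monotone ha c (by omega), rmin_snoc_of_monotone hb c (by omega)]
    omega
  · refine ⟨ℓ + 2, by omega, by omega, ?_⟩
    rw [rmin_snoc_of_monotone ha c h, rmin_snoc_of_monotone hb c h]
    omega

end Majorization

theorem stmt_9 (s : ℕ) (a b : Fin s → ℕ) (hma : Monotone a) (hmb : Monotone b)
    (hsum : ∑ i, a i = ∑ i, b i)
    (hpartial : ∀ i : ℕ, i ≤ s →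
      ∑ j ∈ Finset.univ.filter (fun j : Fin s => (j : ℕ) < i), a j ≤
        ∑ j ∈ Finset.univ.filter (fun j : Fin s => (j : ℕ) < i), b j)
    (hstr : ∃ i : ℕ, 1 ≤ i ∧ i < s ∧
      ∑ j ∈ Finset.univ.filter (fun j : Fin s => (j : ℕ) < i), a j <
        ∑ j ∈ Finset.univ.filter (fun j : Fin s => (j : ℕ) < i), b j)
    (c : ℕ) :
    (∀ i, 1 ≤ i → i ≤ s + 1 →
        rmin (Fin.snoc a c) i ≤ rmin (Fin.snoc b c) i) ∧
      ∃ i, 1 ≤ i ∧ i < s + 1 ∧ rmin (Fin.snoc a c) i < rmin (Fin.snoc b c) i := by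
  refine ⟨fun i _ hi => rmin_snoc_le_rmin_snoc hma hmb hsum hpartial c hi, ?_⟩
  obtain ⟨_ | ℓ, hℓ, hs, hlt⟩ := hstr
  · omega
  · exact exists_rmin_snoc_lt hma hmb c hs hlt
end

section
/- Let λ ∈ ℤ_{≥0}ⁿ with coordinates in the ε-basis b_1 ≥ ... ≥ b_n ≥ 0, and write b_i = p_i·k + r_i with 0 ≤ r_i < k (here b_i = Σ_{ℓ≥i} a_ℓ in the ω-basis). Define λ_j = Σ_{i=1}^n m^{i,j} ε_i where m^{i,j} = p_i + 1 if j ≤ r_i and p_i otherwise. Then λ̄^max = (λ_1,...,λ_k) lies in 𝒫⁺(λ,k), i.e., each λ_j is dominant (m^{i,j} ≥ m^{i+1,j} for all i) and λ_1 + ... + λ_k = λ. -/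
/-! The `k` parts of `b_i` are as equal as possible: `m^{i,j} = ⌊(b_i + k - 1 - j) / k⌋`, so
they add up to `b_i`, and they are monotone in `b_i`, which is antitone in `i`. -/

namespace Nat

theorem div_add_ite_lt_mod {k j : ℕ} (hj : j < k) (b : ℕ) :
    b / k + (if j < b % k then 1 else 0) = (b + (k - 1 - j)) / k := by
  have hk : 0 < k := by omega
  have hr : b % k < k := Nat.mod_lt b hk
  have carry : (b % k + (k - 1 - j)) / k = if j < b % k then 1 else 0 := by
    split_ifs with h
    · exact Nat.div_eq_of_lt_le (by omega) (by omega)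
    · exact Nat.div_eq_of_lt (by omega)
  conv_rhs => rw [← Nat.div_add_mod b k, add_assoc, Nat.mul_add_div hk, carry]

theorem sum_fin_ite_lt {k r : ℕ} (hr : r ≤ k) :
    ∑ j : Fin k, (if (j : ℕ) < r then 1 else 0) = r := by
  rw [Fin.sum_univ_eq_sum_range (fun j => if j < r then 1 else 0), Finset.sum_boole,
    Finset.range_eq_Ico, Finset.Ico_filter_lt, Nat.card_Ico, Nat.cast_id, min_eq_right hr,
    Nat.sub_zero]

theorem sum_fin_div_add_ite_lt_mod {k : ℕ} (hk : 0 < k) (b : ℕ) :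
    ∑ j : Fin k, (b / k + if (j : ℕ) < b % k then 1 else 0) = b := by
  rw [Finset.sum_add_distrib, sum_fin_ite_lt (Nat.mod_lt b hk).le, Finset.sum_const,
    Finset.card_univ, Fintype.card_fin, smul_eq_mul, Nat.div_add_mod]

end Nat

theorem antitone_sum_filter_le {n : ℕ} (a : Fin n → ℕ) :
    Antitone fun i : ℕ => ∑ l ∈ Finset.univ.filter (fun l : Fin n => i ≤ (l : ℕ)), a l :=
  fun _ _ hii' => Finset.sum_le_sum_of_subset <|
    Finset.monotone_filter_right _ fun _ _ => hii'.trans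

theorem stmt_10 (n k : ℕ) (hk : 0 < k) (a : Fin n → ℕ)
    -- `B i = Σ_{ℓ ≥ i} a_ℓ`, the `i`-th ε-coordinate of `λ` (0-indexed)
    (B : ℕ → ℕ) (hB : ∀ i, B i = ∑ l ∈ Finset.univ.filter (fun l : Fin n => i ≤ (l : ℕ)), a l)
    -- `m i j = p_i + 1` if `j ≤ r_i` and `p_i` otherwise, where `B i = p_i k + r_i`
    (m : ℕ → Fin k → ℕ)
    (hm : ∀ i (j : Fin k), m i j = B i / k + if (j : ℕ) < B i % k then 1 else 0) :
    (∀ j : Fin k, ∀ i i' : ℕ, i ≤ i' → m i' j ≤ m i j) ∧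
      ∀ i : ℕ, ∑ j : Fin k, m i j = B i := by
  have hB_anti : Antitone B := funext hB ▸ antitone_sum_filter_le a
  refine ⟨fun j i i' hii' => ?_, fun i => ?_⟩
  · rw [hm, hm, Nat.div_add_ite_lt_mod j.isLt, Nat.div_add_ite_lt_mod j.isLt]
    exact Nat.div_le_div_right (Nat.add_le_add_right (hB_anti hii') _)
  · simp only [hm]
    exact Nat.sum_fin_div_add_ite_lt_mod hk (B i)
end

section
/- With λ̄^max = (λ_1,...,λ_k) ∈ 𝒫⁺(λ,k) as constructed from the division algorithm (λ_j = Σ_i m^{i,j} ε_i, m^{i,j} = p_i + [j ≤ r_i] where Σ_{ℓ≥i} a_ℓ = p_i k + r_i), every μ̄ ∈ 𝒫⁺(λ,k) satisfies μ̄ ⊴ λ̄^max; moreover if μ̄ ∼ λ̄^max then μ̄ is a permutation of λ̄^max. -/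
/-!
Over any coordinate interval `[i, j]` the row sums of `λ̄^max` are balanced: each is `⌊T / k⌋`
or `⌊T / k⌋ + 1`, where `T = ∑_{s ∈ [i, j]} a_s` is the same total as for every `μ̄ ∈ 𝒫⁺(λ, k)`.
Among `k`-tuples of naturals with a given total a balanced one has the largest minimal
`ℓ`-subset sum, so `μ̄ ⊴ λ̄^max`. If all the minima agree, those for `ℓ = 1` and `ℓ = k - 1`
force every interval row sum of `μ̄` to be balanced as well. Then for each level `e` the rows
of `μ̄` whose tail sum from `e` takes the larger value form a set of size `B e % k`, balanced
differences of tails make these sets a chain, and a permutation turning the chain into initial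
segments identifies the tail sums of `μ̄` with those of `λ̄^max` row by row.
-/

/-- `orderR lam i j ℓ`: minimum over `ℓ`-element subsets `S ⊆ {1,…,k}` of
`∑_{t ∈ S} ∑_{s=i}^{j} (λ_t)_s`. -/
noncomputable def orderR {n k : ℕ} (lam : Fin k → Fin n → ℕ) (i j : Fin n) (ℓ : ℕ) : ℕ :=
  sInf {m : ℕ | ∃ S : Finset (Fin k), S.card = ℓ ∧
    m = ∑ t ∈ S, ∑ s ∈ Finset.Icc i j, lam t s}

open Finset

section SubsetSums

variable {ι : Type*}

noncomputable def minSubsetSum (f : ι → ℕ) (ℓ : ℕ) : ℕ :=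
  sInf {m : ℕ | ∃ S : Finset ι, S.card = ℓ ∧ m = ∑ t ∈ S, f t}

theorem orderR_eq_minSubsetSum {n k : ℕ} (lam : Fin k → Fin n → ℕ) (i j : Fin n) (ℓ : ℕ) :
    orderR lam i j ℓ = minSubsetSum (fun t => ∑ s ∈ Icc i j, lam t s) ℓ := rfl

theorem minSubsetSum_le (f : ι → ℕ) {ℓ : ℕ} {S : Finset ι} (hS : S.card = ℓ) :
    minSubsetSum f ℓ ≤ ∑ t ∈ S, f t :=
  Nat.sInf_le ⟨S, hS, rfl⟩

/-- The smallest sum of `ℓ` entries of a `k`-tuple with total `T` whose entries are all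
`T / k` or `T / k + 1`: at least `ℓ + T % k - k` of the chosen entries are the larger value. -/
def balancedMinSum (k T ℓ : ℕ) : ℕ := ℓ * (T / k) + (ℓ + T % k - k)

theorem apply_le_of_minSubsetSum_eq [DecidableEq ι] {f : ι → ℕ} {ℓ : ℕ} {S : Finset ι}
    (hS : S.card = ℓ) (hmin : minSubsetSum f ℓ = ∑ u ∈ S, f u) {s t : ι} (hs : s ∈ S) (ht : t ∉ S) :
    f s ≤ f t := by
  have ht' : t ∉ S.erase s := fun h => ht (mem_of_mem_erase h)
  have hpos := card_pos.mpr ⟨s, hs⟩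
  have hcard : (insert t (S.erase s)).card = ℓ := by
    rw [card_insert_of_notMem ht', card_erase_of_mem hs]
    omega
  have := minSubsetSum_le f hcard
  rw [sum_insert ht', hmin, ← add_sum_erase S f hs] at this
  omega

variable [Fintype ι]

def IsBalanced (f : ι → ℕ) : Prop :=
  ∀ t, (∑ u, f u) / Fintype.card ι ≤ f t ∧ f t ≤ (∑ u, f u) / Fintype.card ι + 1

theorem exists_card_eq_minSubsetSum_eq (f : ι → ℕ) {ℓ : ℕ} (hℓ : ℓ ≤ Fintype.card ι) :
    ∃ S : Finset ι, S.card = ℓ ∧ minSubsetSum f ℓ = ∑ t ∈ S, f t := by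
  obtain ⟨S, -, hS⟩ := exists_subset_card_eq (s := (univ : Finset ι)) (by simpa using hℓ)
  exact Nat.sInf_mem (s := {m | ∃ S : Finset ι, S.card = ℓ ∧ m = ∑ t ∈ S, f t}) ⟨_, S, hS, rfl⟩

theorem minSubsetSum_le_balancedMinSum [DecidableEq ι] (f : ι → ℕ) {ℓ : ℕ}
    (hℓ : ℓ ≤ Fintype.card ι) :
    minSubsetSum f ℓ ≤ balancedMinSum (Fintype.card ι) (∑ t, f t) ℓ := by
  obtain ⟨S, hS, hmin⟩ := exists_card_eq_minSubsetSum_eq f hℓ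
  have htotal := sum_add_sum_compl S f
  have hdiv := Nat.div_add_mod (∑ t, f t) (Fintype.card ι)
  have hcard : Sᶜ.card = Fintype.card ι - ℓ := by rw [card_compl, hS]
  rw [balancedMinSum, hmin]
  generalize (∑ t, f t) / Fintype.card ι = q at *
  by_cases hsmall : ∀ s ∈ S, f s ≤ q
  · have : ∑ t ∈ S, f t ≤ S.card • q := sum_le_card_nsmul S f q hsmall
    rw [hS, smul_eq_mul] at this
    omega
  push Not at hsmall
  obtain ⟨s, hs, hqs⟩ := hsmall
  have hcompl : Sᶜ.card • (q + 1) ≤ ∑ t ∈ Sᶜ, f t := card_nsmul_le_sum Sᶜ f (q + 1) fun t ht =>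
    hqs.trans_le (apply_le_of_minSubsetSum_eq hS hmin hs (mem_compl.mp ht))
  rw [hcard, smul_eq_mul] at hcompl
  generalize Fintype.card ι = k at *
  obtain ⟨d, rfl⟩ : ∃ d, k = ℓ + d := ⟨k - ℓ, by omega⟩
  rw [Nat.add_sub_cancel_left, mul_add] at hcompl
  rw [add_mul] at hdiv
  omega

theorem IsBalanced.minSubsetSum_eq [DecidableEq ι] {f : ι → ℕ} (hf : IsBalanced f) {ℓ : ℕ}
    (hℓ : ℓ ≤ Fintype.card ι) :
    minSubsetSum f ℓ = balancedMinSum (Fintype.card ι) (∑ t, f t) ℓ := by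
  refine (minSubsetSum_le_balancedMinSum f hℓ).antisymm ?_
  obtain ⟨S, hS, hmin⟩ := exists_card_eq_minSubsetSum_eq f hℓ
  have hlow : S.card • ((∑ t, f t) / Fintype.card ι) ≤ ∑ t ∈ S, f t :=
    card_nsmul_le_sum S f _ fun t _ => (hf t).1
  have hhigh : ∑ t ∈ Sᶜ, f t ≤ Sᶜ.card • ((∑ t, f t) / Fintype.card ι + 1) :=
    sum_le_card_nsmul Sᶜ f _ fun t _ => (hf t).2
  have htotal := sum_add_sum_compl S f
  have hdiv := Nat.div_add_mod (∑ t, f t) (Fintype.card ι)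
  rw [hS, smul_eq_mul] at hlow
  rw [card_compl, hS, smul_eq_mul] at hhigh
  rw [balancedMinSum, hmin]
  generalize (∑ t, f t) / Fintype.card ι = q at *
  generalize Fintype.card ι = k at *
  obtain ⟨d, rfl⟩ : ∃ d, k = ℓ + d := ⟨k - ℓ, by omega⟩
  rw [Nat.add_sub_cancel_left, mul_add] at hhigh
  rw [add_mul] at hdiv
  omega

theorem isBalanced_of_minSubsetSum_eq [DecidableEq ι] {f : ι → ℕ}
    (h : ∀ ℓ, 1 ≤ ℓ → ℓ ≤ Fintype.card ι →
      minSubsetSum f ℓ = balancedMinSum (Fintype.card ι) (∑ t, f t) ℓ) :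
    IsBalanced f := by
  intro t
  have hk : 0 < Fintype.card ι := Fintype.card_pos_iff.mpr ⟨t⟩
  have hmod := Nat.mod_lt (∑ u, f u) hk
  have hdiv := Nat.div_add_mod (∑ u, f u) (Fintype.card ι)
  have hmin := minSubsetSum_le f (card_singleton t)
  have hcompl : balancedMinSum (Fintype.card ι) (∑ u, f u) (Fintype.card ι - 1) ≤
      ∑ u ∈ {t}ᶜ, f u := by
    rcases Nat.eq_zero_or_pos (Fintype.card ι - 1) with h0 | hpos
    · rw [h0, balancedMinSum]
      omega
    · rw [← h _ hpos (by omega)]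
      exact minSubsetSum_le f (by rw [card_compl, card_singleton])
  have htotal := sum_add_sum_compl {t} f
  rw [h 1 le_rfl hk, sum_singleton] at hmin
  rw [sum_singleton] at htotal
  rw [balancedMinSum] at hmin hcompl
  generalize (∑ u, f u) / Fintype.card ι = q at *
  generalize Fintype.card ι = k at *
  obtain ⟨d, rfl⟩ : ∃ d, k = d + 1 := ⟨k - 1, by omega⟩
  rw [Nat.add_sub_cancel] at hcompl
  rw [add_mul] at hdiv
  omega

theorem IsBalanced.card_filter_eq_add_one {f : ι → ℕ} (hf : IsBalanced f) :
    #{t | f t = (∑ u, f u) / Fintype.card ι + 1} = (∑ u, f u) % Fintype.card ι := by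
  have hsplit : ∀ t, f t = (∑ u, f u) / Fintype.card ι +
      if f t = (∑ u, f u) / Fintype.card ι + 1 then 1 else 0 := by
    intro t
    have := hf t
    split_ifs <;> omega
  have hsum : ∑ u, f u = Fintype.card ι * ((∑ u, f u) / Fintype.card ι) +
      #{t | f t = (∑ u, f u) / Fintype.card ι + 1} := by
    conv_lhs => rw [sum_congr rfl fun t _ => hsplit t]
    rw [sum_add_distrib, sum_const, card_univ, smul_eq_mul, sum_boole, Nat.cast_id]
  have := Nat.div_add_mod (∑ u, f u) (Fintype.card ι)
  omega

end SubsetSums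

theorem exists_perm_lt_of_lt {k : ℕ} (w : Fin k → ℕ) :
    ∃ σ : Equiv.Perm (Fin k), ∀ t t', w t' < w t → σ t < σ t' := by
  refine ⟨(Tuple.sort (OrderDual.toDual ∘ w)).symm, fun t t' hw => ?_⟩
  by_contra! hle
  have := Tuple.monotone_sort (OrderDual.toDual ∘ w) hle
  simp only [Function.comp_apply, Equiv.apply_symm_apply, OrderDual.toDual_le_toDual] at this
  omega

theorem lt_card_iff_mem_of_forall_lt {k : ℕ} (σ : Equiv.Perm (Fin k)) {A : Finset (Fin k)}
    (hA : ∀ t ∈ A, ∀ t' ∉ A, σ t < σ t') (t : Fin k) : (σ t : ℕ) < #A ↔ t ∈ A := by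
  constructor
  · intro hlt
    by_contra ht
    have hsub : A.map σ.toEmbedding ⊆ Iio (σ t) := fun x hx => by
      obtain ⟨u, hu, rfl⟩ := mem_map.mp hx
      exact mem_Iio.mpr (hA u hu t ht)
    have := card_le_card hsub
    rw [card_map, Fin.card_Iio] at this
    omega
  · intro ht
    have hsub : Iic (σ t) ⊆ A.map σ.toEmbedding := fun x hx => by
      rw [mem_map_equiv]
      by_contra hx'
      have := hA t ht _ hx'
      rw [Equiv.apply_symm_apply] at this
      exact not_le.mpr this (mem_Iic.mp hx)
    have := card_le_card hsub
    rw [card_map, Fin.card_Iic] at this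
    omega

theorem exists_perm_lt_card_iff_mem {κ : Type*} [Fintype κ] {k : ℕ} (A : κ → Finset (Fin k))
    (hA : ∀ e e', A e ⊆ A e' ∨ A e' ⊆ A e) :
    ∃ σ : Equiv.Perm (Fin k), ∀ e t, (σ t : ℕ) < #(A e) ↔ t ∈ A e := by
  -- rank elements by the number of members of the chain containing them
  obtain ⟨σ, hσ⟩ := exists_perm_lt_of_lt fun t => #{e | t ∈ A e}
  refine ⟨σ, fun e => lt_card_iff_mem_of_forall_lt σ fun t ht t' ht' => hσ t t' ?_⟩
  refine card_lt_card ⟨fun e' he' => ?_, fun hsub => ht' ?_⟩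
  · simp only [mem_filter, mem_univ, true_and] at he' ⊢
    exact (hA e e').elim (fun h => h ht) fun h => absurd (h he') ht'
  · simpa using hsub (by simpa using ht)

section BalancedSplit

def balancedSplit (k b : ℕ) (t : Fin k) : ℕ := b / k + if (t : ℕ) < b % k then 1 else 0

variable {k : ℕ}

theorem sum_balancedSplit (hk : 0 < k) (b : ℕ) : ∑ t, balancedSplit k b t = b := by
  simp only [balancedSplit, sum_add_distrib, sum_const, card_univ, Fintype.card_fin,
    smul_eq_mul, sum_boole, Nat.cast_id, Fin.card_filter_val_lt]
  rw [min_eq_right (Nat.mod_lt b hk).le]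
  exact Nat.div_add_mod b k

theorem balancedSplit_eq_div (hk : 0 < k) (b : ℕ) (t : Fin k) :
    balancedSplit k b t = (b + (k - 1 - t)) / k := by
  have hdiv := Nat.div_add_mod b k
  have hmod := Nat.mod_lt b hk
  conv_rhs => rw [← hdiv, add_assoc, Nat.mul_add_div hk]
  rw [balancedSplit]
  congr 1
  split_ifs
  · exact (Nat.div_eq_of_lt_le (by omega) (by omega)).symm
  · exact (Nat.div_eq_of_lt (by omega)).symm

theorem balancedSplit_add_bounds (hk : 0 < k) (b T : ℕ) (t : Fin k) :
    balancedSplit k b t + T / k ≤ balancedSplit k (b + T) t ∧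
      balancedSplit k (b + T) t ≤ balancedSplit k b t + T / k + 1 := by
  simp only [balancedSplit_eq_div hk, add_right_comm b T]
  exact ⟨Nat.div_add_div_le_add_div, Nat.add_div_le_div_add_div_add_one _ _ _⟩

theorem exists_perm_eq_balancedSplit {κ : Type*} [Fintype κ] [LinearOrder κ]
    (X : κ → Fin k → ℕ) (hX : ∀ e, IsBalanced (X e))
    (hdiff : ∀ e e', e < e' → ∀ t t', X e t + X e' t' ≤ X e t' + X e' t + 1) :
    ∃ σ : Equiv.Perm (Fin k), ∀ e t, X e t = balancedSplit k (∑ u, X e u) (σ t) := by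
  set A : κ → Finset (Fin k) := fun e => {t | X e t = (∑ u, X e u) / k + 1}
  have hsplit : ∀ e t, X e t = (∑ u, X e u) / k + if t ∈ A e then 1 else 0 := by
    intro e t
    have := hX e t
    simp only [Fintype.card_fin] at this
    simp only [A, mem_filter, mem_univ, true_and]
    split_ifs <;> omega
  have hchain : ∀ e e', e < e' → A e ⊆ A e' ∨ A e' ⊆ A e := by
    intro e e' hlt
    by_contra! h
    obtain ⟨t, htA, htA'⟩ := not_subset.mp h.1
    obtain ⟨t', ht'A', ht'A⟩ := not_subset.mp h.2
    -- the inequality `hdiff` would fail by 2 for these two rows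
    have := hdiff e e' hlt t t'
    rw [hsplit e t, hsplit e' t', hsplit e t', hsplit e' t] at this
    simp only [htA, htA', ht'A', ht'A, if_true, if_false] at this
    omega
  obtain ⟨σ, hσ⟩ := exists_perm_lt_card_iff_mem A fun e e' => by
    rcases lt_trichotomy e e' with h | rfl | h
    · exact hchain e e' h
    · exact .inl subset_rfl
    · exact (hchain e' e h).symm
  refine ⟨σ, fun e t => ?_⟩
  have hcard := (hX e).card_filter_eq_add_one
  simp only [Fintype.card_fin] at hcard
  rw [hsplit e t, balancedSplit, ← hcard]
  exact congrArg _ (if_congr (hσ e t).symm rfl rfl)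

end BalancedSplit

section Tableaux

variable {n k : ℕ}

def tailSum (x : Fin n → ℕ) (e : ℕ) : ℕ := ∑ s ∈ univ.filter (fun s : Fin n => e ≤ (s : ℕ)), x s

theorem sum_Icc_add_tailSum (x : Fin n → ℕ) {i j : Fin n} (hij : i ≤ j) :
    ∑ s ∈ Icc i j, x s + tailSum x (j + 1) = tailSum x i := by
  rw [tailSum, tailSum, ← sum_union]
  · congr 1
    ext s
    simp only [mem_union, mem_Icc, mem_filter, mem_univ, true_and, Fin.le_def] at hij ⊢
    omega
  · rw [disjoint_left]
    intro s hs hs'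
    simp only [mem_Icc, mem_filter, mem_univ, true_and, Fin.le_def] at hs hs'
    omega

theorem tailSum_eq_add (x : Fin n → ℕ) (s : Fin n) : tailSum x s = x s + tailSum x (s + 1) := by
  simpa using (sum_Icc_add_tailSum x le_rfl).symm

theorem tailSum_of_le (x : Fin n → ℕ) {e : ℕ} (h : n ≤ e) : tailSum x e = 0 :=
  sum_eq_zero fun s hs => absurd (mem_filter.mp hs).2 (by have := s.isLt; omega)

theorem tailSum_succ_le (x : Fin n → ℕ) (e : ℕ) : tailSum x (e + 1) ≤ tailSum x e :=
  sum_le_sum_of_subset (monotone_filter_right _ fun _ h => by omega)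

theorem tailSum_eq_of_eq_tsub {x : Fin n → ℕ} {M : ℕ → ℕ} (hM : ∀ e, M (e + 1) ≤ M e)
    (hMn : M n = 0) (hx : ∀ s, x s = M s - M (s + 1)) {e : ℕ} (he : e ≤ n) :
    tailSum x e = M e := by
  induction he using Nat.decreasingInduction with
  | self => rw [tailSum_of_le x le_rfl, hMn]
  | of_succ e he ih =>
    rw [tailSum_eq_add x ⟨e, he⟩, hx, ih]
    exact Nat.sub_add_cancel (hM e)

/-- `λ̄^max` in `ω`-coordinates: its `t`-th member has `ε`-coordinates
`m^{e,t} = balancedSplit k (tailSum a e) t`. -/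
def maxTableau (k : ℕ) (a : Fin n → ℕ) (t : Fin k) (s : Fin n) : ℕ :=
  balancedSplit k (tailSum a s) t - balancedSplit k (tailSum a (s + 1)) t

theorem balancedSplit_mono (hk : 0 < k) {b b' : ℕ} (h : b ≤ b') (t : Fin k) :
    balancedSplit k b t ≤ balancedSplit k b' t := by
  obtain ⟨T, rfl⟩ := exists_add_of_le h
  exact (Nat.le_add_right _ _).trans (balancedSplit_add_bounds hk b T t).1

theorem tailSum_maxTableau (hk : 0 < k) (a : Fin n → ℕ) (t : Fin k) {e : ℕ} (he : e ≤ n) :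
    tailSum (maxTableau k a t) e = balancedSplit k (tailSum a e) t :=
  tailSum_eq_of_eq_tsub (M := fun e => balancedSplit k (tailSum a e) t)
    (fun e => balancedSplit_mono hk (tailSum_succ_le a e) t)
    (by simp [tailSum_of_le a le_rfl, balancedSplit]) (fun _ => rfl) he

theorem sum_maxTableau (hk : 0 < k) (a : Fin n → ℕ) (s : Fin n) :
    ∑ t, maxTableau k a t s = a s := by
  simp only [maxTableau]
  rw [sum_tsub_distrib _ fun t _ => balancedSplit_mono hk (tailSum_succ_le a s) t,
    sum_balancedSplit hk, sum_balancedSplit hk, tailSum_eq_add a s, Nat.add_sub_cancel]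

theorem isBalanced_of_add_balancedSplit (hk : 0 < k) {g : Fin k → ℕ} {b b' : ℕ}
    (h : ∀ t, g t + balancedSplit k b t = balancedSplit k b' t) : IsBalanced g := by
  have htotal : b' = b + ∑ t, g t := by
    rw [← sum_balancedSplit hk b', ← sum_balancedSplit hk b, add_comm, ← sum_add_distrib]
    exact (sum_congr rfl fun t _ => h t).symm
  intro t
  have := balancedSplit_add_bounds hk b (∑ t, g t) t
  rw [← htotal, ← h t] at this
  rw [Fintype.card_fin]
  omega

theorem isBalanced_sum_Icc_maxTableau (hk : 0 < k) (a : Fin n → ℕ) {i j : Fin n} (hij : i ≤ j) :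
    IsBalanced fun t => ∑ s ∈ Icc i j, maxTableau k a t s :=
  isBalanced_of_add_balancedSplit hk (b := tailSum a (j + 1)) (b' := tailSum a i) fun t => by
    rw [← tailSum_maxTableau hk a t j.isLt, ← tailSum_maxTableau hk a t i.isLt.le,
      sum_Icc_add_tailSum _ hij]

theorem sum_tailSum {a : Fin n → ℕ} {mu : Fin k → Fin n → ℕ} (hmu : ∀ s, ∑ t, mu t s = a s)
    (e : ℕ) : ∑ t, tailSum (mu t) e = tailSum a e := by
  rw [tailSum, ← sum_congr rfl fun s _ => hmu s, sum_comm]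
  rfl

theorem tailSum_add_le_of_isBalanced {mu : Fin k → Fin n → ℕ}
    (hbal : ∀ i j : Fin n, i ≤ j → IsBalanced fun t => ∑ s ∈ Icc i j, mu t s)
    {e e' : Fin n} (hlt : e < e') (t t' : Fin k) :
    tailSum (mu t) e + tailSum (mu t') e' ≤ tailSum (mu t') e + tailSum (mu t) e' + 1 := by
  set j : Fin n := ⟨e' - 1, by omega⟩
  have hej : e ≤ j := Fin.le_def.mpr (by simp only [j]; omega)
  have hj : (j : ℕ) + 1 = e' := by simp only [j]; omega
  have h := sum_Icc_add_tailSum (mu t) hej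
  have h' := sum_Icc_add_tailSum (mu t') hej
  have hb := hbal e j hej t
  have hb' := hbal e j hej t'
  simp only [Fintype.card_fin] at hb hb'
  rw [hj] at h h'
  omega

theorem exists_perm_eq_maxTableau {a : Fin n → ℕ} {mu : Fin k → Fin n → ℕ}
    (hmu : ∀ s, ∑ t, mu t s = a s)
    (hbal : ∀ i j : Fin n, i ≤ j → IsBalanced fun t => ∑ s ∈ Icc i j, mu t s) :
    ∃ σ : Equiv.Perm (Fin k), mu = maxTableau k a ∘ σ := by
  have htail : ∀ e : Fin n, IsBalanced fun t => tailSum (mu t) e := by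
    intro e
    have := e.isLt
    set last : Fin n := ⟨n - 1, by omega⟩
    have hlast : e ≤ last := Fin.le_def.mpr (by simp only [last]; omega)
    have hsum : ∀ t, ∑ s ∈ Icc e last, mu t s = tailSum (mu t) e := fun t => by
      rw [← sum_Icc_add_tailSum (mu t) hlast, tailSum_of_le _ (by simp only [last]; omega),
        add_zero]
    exact funext hsum ▸ hbal e last hlast
  obtain ⟨σ, hσ⟩ := exists_perm_eq_balancedSplit (fun (e : Fin n) t => tailSum (mu t) e) htail
    fun e e' hlt t t' => tailSum_add_le_of_isBalanced hbal hlt t t'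
  have hσ' : ∀ e ≤ n, ∀ t, tailSum (mu t) e = balancedSplit k (tailSum a e) (σ t) := by
    intro e he t
    rcases he.lt_or_eq with he | rfl
    · simpa only [sum_tailSum hmu] using hσ ⟨e, he⟩ t
    · simp [tailSum_of_le _ le_rfl, balancedSplit]
  refine ⟨σ, funext₂ fun t s => ?_⟩
  have := tailSum_eq_add (mu t) s
  rw [hσ' s s.isLt.le, hσ' (s + 1) s.isLt] at this
  rw [Function.comp_apply, maxTableau, this, Nat.add_sub_cancel]

end Tableaux

theorem stmt_11 (n k : ℕ) (hk : 0 < k) (a : Fin n → ℕ)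
    -- `B i = Σ_{ℓ ≥ i} a_ℓ`, the `i`-th ε-coordinate of `λ` (0-indexed)
    (B : ℕ → ℕ) (hB : ∀ i, B i = ∑ l ∈ Finset.univ.filter (fun l : Fin n => i ≤ (l : ℕ)), a l)
    (m : ℕ → Fin k → ℕ)
    (hm : ∀ i (j : Fin k), m i j = B i / k + if (j : ℕ) < B i % k then 1 else 0)
    -- `λ̄^max` written in ω-coordinates
    (lamMax : Fin k → Fin n → ℕ)
    (hlamMax : ∀ (t : Fin k) (s : Fin n), lamMax t s = m (s : ℕ) t - m ((s : ℕ) + 1) t)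
    (muBar : Fin k → Fin n → ℕ) (hmu : ∀ s, ∑ t, muBar t s = a s) :
    (∀ (i j : Fin n) (ℓ : ℕ), i ≤ j → 1 ≤ ℓ → ℓ ≤ k →
        orderR muBar i j ℓ ≤ orderR lamMax i j ℓ) ∧
      ((∀ (i j : Fin n) (ℓ : ℕ), i ≤ j → 1 ≤ ℓ → ℓ ≤ k →
          orderR muBar i j ℓ = orderR lamMax i j ℓ) →
        ∃ σ : Equiv.Perm (Fin k), muBar = lamMax ∘ σ) := by
  obtain rfl : B = tailSum a := funext hB
  obtain rfl : lamMax = maxTableau k a := funext₂ fun t s => by rw [hlamMax, hm, hm]; rfl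
  have htotal : ∀ i j : Fin n,
      ∑ t, ∑ s ∈ Icc i j, maxTableau k a t s = ∑ t, ∑ s ∈ Icc i j, muBar t s := fun i j => by
    rw [sum_comm, sum_comm (s := univ)]
    simp only [sum_maxTableau hk, hmu]
  have horder : ∀ (i j : Fin n) (ℓ : ℕ), i ≤ j → ℓ ≤ k →
      orderR (maxTableau k a) i j ℓ = balancedMinSum k (∑ t, ∑ s ∈ Icc i j, muBar t s) ℓ := by
    intro i j ℓ hij hℓ
    rw [orderR_eq_minSubsetSum, (isBalanced_sum_Icc_maxTableau hk a hij).minSubsetSum_eq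
      (by simpa using hℓ), Fintype.card_fin, htotal]
  refine ⟨fun i j ℓ hij _ hℓ => ?_, fun heq => exists_perm_eq_maxTableau hmu fun i j hij => ?_⟩
  · rw [horder i j ℓ hij hℓ, orderR_eq_minSubsetSum]
    simpa using minSubsetSum_le_balancedMinSum (fun t => ∑ s ∈ Icc i j, muBar t s)
      (by simpa using hℓ)
  · refine isBalanced_of_minSubsetSum_eq fun ℓ h1 hℓ => ?_
    rw [Fintype.card_fin] at hℓ ⊢
    rw [← orderR_eq_minSubsetSum, heq i j ℓ hij h1 hℓ, horder i j ℓ hij hℓ]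
end

section
/- In the poset 𝒫⁺(λ,2)/∼, any element λ̄ = (λ_1,λ_2) has at most n covers of type I and at most 2^{n-1} − 1 covers of type II, hence at most n + 2^{n-1} − 1 covers in total. -/
/-!
Encode a pair `q` with `q.1 + q.2 = λ` by its walk `k ↦ ∑_{s<k} (q.1 s - q.2 s)`.
Then `p ⊴ q` says that every increment of the walk of `q` is at most the corresponding
increment of the walk of `p` in absolute value, so the walk of `q` is a 1-Lipschitz function of
the walk of `p` vanishing at height `0`; and the walk up to sign determines `q` up to swapping.

Cut the range of the walk of `p` at the heights it visits: there are at most `n + 1` of them,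
hence at most `n` gaps. If a cover `q` shortens some gap, it shortens it by at least two (parity),
and then the pair obtained from `p` by lowering every height above that gap by two lies between
`p` and `q`; so `q` is that pair (type I), and there are at most `n` such covers. Otherwise `q`
keeps every gap and is determined by whether it goes up or down across each of them; up to a
global sign, and leaving out `p` itself, this gives at most `2^(n-1) - 1` covers (type II).
-/

/-- `rs v i j = Σ_{s=i}^{j} v_s`, the range sum of coordinates `i` through `j`. -/
def rs {n : ℕ} (v : Fin n → ℕ) (i j : Fin n) : ℕ := ∑ s ∈ Finset.Icc i j, v s

/-- The preorder `⊴` on pairs of dominant vectors (the `ℓ = 2` inequalities are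
automatic for pairs with the same sum). -/
def ple {n : ℕ} (p q : (Fin n → ℕ) × (Fin n → ℕ)) : Prop :=
  ∀ i j : Fin n, i ≤ j →
    min (rs p.1 i j) (rs p.2 i j) ≤ min (rs q.1 i j) (rs q.2 i j)

/-- `q` is a cover of `p` in the poset `𝒫⁺(λ,2)/∼`. -/
def pcover {n : ℕ} (lam : Fin n → ℕ) (p q : (Fin n → ℕ) × (Fin n → ℕ)) : Prop :=
  p.1 + p.2 = lam ∧ q.1 + q.2 = lam ∧ ple p q ∧ ¬ ple q p ∧
    ∀ r : (Fin n → ℕ) × (Fin n → ℕ), r.1 + r.2 = lam →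
      ple p r → ple r q → (ple r p ∨ ple q r)

namespace PairCovers

open Finset

lemma min_le_min_iff_abs_sub_le {a b c d : ℤ} (h : a + b = c + d) :
    min a b ≤ min c d ↔ |c - d| ≤ |a - b| := by
  have hab := max_sub_min_eq_abs' a b
  have hcd := max_sub_min_eq_abs' c d
  have := min_add_max a b
  have := min_add_max c d
  constructor <;> intro <;> linarith

lemma eqOn_or_eqOn_neg_of_abs_sub_eq {ι : Type*} {s : Set ι} {E F : ι → ℤ} {a : ι}
    (ha : a ∈ s) (hE : E a = 0) (hF : F a = 0)
    (h : ∀ k ∈ s, ∀ l ∈ s, |E l - E k| = |F l - F k|) :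
    Set.EqOn E F s ∨ Set.EqOn E (-F) s := by
  have hpm : ∀ k ∈ s, E k = F k ∨ E k = -F k := fun k hk =>
    abs_eq_abs.1 (by simpa [hE, hF] using h a ha k hk)
  by_contra! hne
  simp only [Set.EqOn, not_forall, Pi.neg_apply] at hne
  obtain ⟨⟨k, hk, hEk⟩, ⟨l, hl, hEl⟩⟩ := hne
  have := abs_eq_abs.1 (h k hk l hl)
  have := (hpm k hk).resolve_left hEk
  have := (hpm l hl).resolve_right hEl
  -- now `F k ≠ 0`, `F l ≠ 0` and `|F l + F k| = |F l - F k|`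
  omega

section nextAbove

variable {α : Type*} [LinearOrder α] {s : Finset α} {a b : α}

/-- Junk value `a` when no element of `s` lies above `a`. -/
noncomputable def nextAbove (s : Finset α) (a : α) : α :=
  if h : (s.filter (a < ·)).Nonempty then (s.filter (a < ·)).min' h else a

lemma nextAbove_spec (hb : b ∈ s) (hab : a < b) :
    nextAbove s a ∈ s ∧ a < nextAbove s a ∧ ∀ c ∈ s, a < c → nextAbove s a ≤ c := by
  have hne : (s.filter (a < ·)).Nonempty := ⟨b, mem_filter.2 ⟨hb, hab⟩⟩
  rw [nextAbove, dif_pos hne]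
  obtain ⟨hmem, hlt⟩ := mem_filter.1 (min'_mem _ hne)
  exact ⟨hmem, hlt, fun c hc hac => min'_le _ c (mem_filter.2 ⟨hc, hac⟩)⟩

lemma eq_max'_of_apply_nextAbove_eq {β : Type*} (hs : s.Nonempty) {d : α → β}
    (h : ∀ a ∈ s.erase (s.max' hs), d (nextAbove s a) = d a) :
    ∀ a ∈ s, d a = d (s.max' hs) := by
  classical
  by_contra! hbad
  obtain ⟨a, ha, hda⟩ := hbad
  let bad := s.filter (d · ≠ d (s.max' hs))
  have hbad : bad.Nonempty := ⟨a, mem_filter.2 ⟨ha, hda⟩⟩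
  obtain ⟨hm, hdm⟩ := mem_filter.1 (bad.max'_mem hbad)
  have hlt : bad.max' hbad < s.max' hs :=
    (le_max' s _ hm).lt_of_ne fun heq => hdm (congrArg d heq)
  obtain ⟨hnext, hgt, -⟩ := nextAbove_spec (max'_mem s hs) hlt
  have : d (nextAbove s (bad.max' hbad)) = d (s.max' hs) := by
    by_contra hne
    exact absurd (le_max' bad _ (mem_filter.2 ⟨hnext, hne⟩)) (not_le.2 hgt)
  exact hdm ((h _ (mem_erase.2 ⟨hlt.ne, hm⟩)).symm.trans this)

end nextAbove

def shrink (c x : ℤ) : ℤ := if c < x then x - 2 else x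

lemma shrink_sub_shrink_of_le {c x y : ℤ} (hx : x ≤ c) (hy : y ≤ c) :
    shrink c x - shrink c y = x - y := by
  simp [shrink, not_lt.2 hx, not_lt.2 hy]

lemma shrink_sub_shrink_of_lt {c x y : ℤ} (hx : c < x) (hy : c < y) :
    shrink c x - shrink c y = x - y := by
  simp [shrink, hx, hy]

lemma shrink_sub_shrink_of_le_of_lt {c x y : ℤ} (hy : y ≤ c) (hx : c < x) :
    shrink c x - shrink c y = x - y - 2 := by
  simp [shrink, hx, not_lt.2 hy]; ring

lemma abs_shrink_sub_shrink_le (c x y : ℤ) : |shrink c x - shrink c y| ≤ |x - y| := by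
  unfold shrink
  rw [abs_le]
  split_ifs <;> constructor <;> cases abs_cases (x - y) <;> omega

lemma even_shrink_sub (c x : ℤ) : Even (shrink c x - x) := by
  unfold shrink
  split_ifs
  · exact ⟨-1, by ring⟩
  · simp

variable {n : ℕ}

abbrev Pair (n : ℕ) : Type := (Fin n → ℕ) × (Fin n → ℕ)

/-- The steps after step `n` are `0`, so the walk is constant from time `n` on. -/
def walk (q : Pair n) (k : ℕ) : ℤ :=
  ∑ s ∈ range k, if h : s < n then ((q.1 ⟨s, h⟩ : ℤ) - q.2 ⟨s, h⟩) else 0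

@[simp]
lemma walk_zero (q : Pair n) : walk q 0 = 0 := by
  simp [walk]

lemma walk_succ (q : Pair n) {k : ℕ} (hk : k < n) :
    walk q (k + 1) = walk q k + ((q.1 ⟨k, hk⟩ : ℤ) - q.2 ⟨k, hk⟩) := by
  simp [walk, sum_range_succ, hk]

lemma walk_swap (q : Pair n) (k : ℕ) : walk q.swap k = -walk q k := by
  rw [walk, walk, ← sum_neg_distrib]
  refine sum_congr rfl fun s _ => ?_
  split_ifs <;> simp

lemma walk_add_one_sub_walk (q : Pair n) {i j : Fin n} (hij : i ≤ j) :
    walk q (j + 1) - walk q i = (rs q.1 i j : ℤ) - rs q.2 i j := by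
  have hij : (i : ℕ) ≤ j + 1 := by have : (i : ℕ) ≤ j := hij; omega
  rw [walk, walk, ← sum_Ico_eq_sub _ hij, Finset.Ico_add_one_right_eq_Icc, rs, rs,
    Nat.cast_sum, Nat.cast_sum, ← sum_sub_distrib, ← Fin.map_valEmbedding_Icc, sum_map]
  simp

lemma even_walk_sub_walk {p q : Pair n} (h : p.1 + p.2 = q.1 + q.2)
    (k : ℕ) : Even (walk q k - walk p k) := by
  rw [walk, walk, ← sum_sub_distrib]
  refine even_sum _ fun s _ => ?_
  split_ifs with hs
  · have := congrFun h ⟨s, hs⟩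
    simp only [Pi.add_apply] at this
    exact ⟨(q.1 ⟨s, hs⟩ : ℤ) - p.1 ⟨s, hs⟩, by omega⟩
  · simp

lemma abs_walk_succ_sub_le (q : Pair n) (k : Fin n) :
    |walk q (k + 1) - walk q k| ≤ ((q.1 + q.2) k : ℕ) := by
  rw [walk_succ q k.2, add_sub_cancel_left, abs_le]
  simp only [Fin.eta, Pi.add_apply, Nat.cast_add]
  omega

def Contracts (p q : Pair n) : Prop :=
  ∀ k ≤ n, ∀ l ≤ n, |walk q l - walk q k| ≤ |walk p l - walk p k|

lemma contracts_refl (p : Pair n) : Contracts p p :=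
  fun _ _ _ _ => le_rfl

lemma rs_add_rs (v w : Fin n → ℕ) (i j : Fin n) : rs v i j + rs w i j = rs (v + w) i j := by
  simp only [rs, Pi.add_apply, sum_add_distrib]

lemma ple_iff_contracts {p q : Pair n} (h : p.1 + p.2 = q.1 + q.2) :
    ple p q ↔ Contracts p q := by
  have key : ∀ i j : Fin n, i ≤ j →
      (min (rs p.1 i j) (rs p.2 i j) ≤ min (rs q.1 i j) (rs q.2 i j) ↔
        |walk q (j + 1) - walk q i| ≤ |walk p (j + 1) - walk p i|) := by
    intro i j hij
    have hsum : (rs p.1 i j : ℤ) + rs p.2 i j = rs q.1 i j + rs q.2 i j := by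
      rw [← Nat.cast_add, ← Nat.cast_add, rs_add_rs, rs_add_rs, h]
    rw [walk_add_one_sub_walk p hij, walk_add_one_sub_walk q hij,
      ← min_le_min_iff_abs_sub_le hsum, ← Nat.cast_min, ← Nat.cast_min, Nat.cast_le]
  refine ⟨fun hple k hk l hl => ?_,
    fun hc i j hij => (key i j hij).2 (hc i (by omega) (j + 1) j.2)⟩
  wlog hkl : k ≤ l generalizing k l
  · rw [abs_sub_comm, abs_sub_comm (walk p l)]
    exact this l hl k hk (by omega)
  obtain rfl | hkl := hkl.eq_or_lt
  · simp
  have := (key ⟨k, by omega⟩ ⟨l - 1, by omega⟩ (Fin.mk_le_mk.2 (by omega))).1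
    (hple _ _ (Fin.mk_le_mk.2 (by omega)))
  rwa [show l - 1 + 1 = l by omega] at this

lemma eq_of_walk_eq {q r : Pair n} (h : q.1 + q.2 = r.1 + r.2)
    (hw : ∀ k ≤ n, walk q k = walk r k) : q = r := by
  have hstep (k : Fin n) : (q.1 k : ℤ) - q.2 k = r.1 k - r.2 k := by
    have := walk_succ q k.2
    have := walk_succ r k.2
    have := hw k (by omega)
    have := hw (k + 1) k.2
    simp only [Fin.eta] at *
    omega
  have hsum (k : Fin n) : q.1 k + q.2 k = r.1 k + r.2 k := congrFun h k
  ext k <;> have := hstep k <;> have := hsum k <;> omega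

lemma sym2_eq_of_contracts {q r : Pair n} (h : q.1 + q.2 = r.1 + r.2)
    (hqr : Contracts q r) (hrq : Contracts r q) : s(q.1, q.2) = s(r.1, r.2) := by
  rcases eqOn_or_eqOn_neg_of_abs_sub_eq (s := Set.Iic n) (E := walk q) (F := walk r)
    (Set.mem_Iic.2 (Nat.zero_le n)) (walk_zero q) (walk_zero r)
    (fun k hk l hl => le_antisymm (hrq k hk l hl) (hqr k hk l hl)) with hw | hw
  · rw [eq_of_walk_eq h hw]
  · have : q = r.swap := eq_of_walk_eq (by rw [h, Prod.fst_swap, Prod.snd_swap, add_comm])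
      fun k hk => by rw [walk_swap]; exact hw hk
    rw [this, Prod.fst_swap, Prod.snd_swap, Sym2.eq_swap]

/-- The pair with coordinate sums `lam` whose walk has the increments of `S`, provided these
are admissible (`ofIncrements_add`, `walk_ofIncrements`). -/
def ofIncrements (lam : Fin n → ℕ) (S : ℕ → ℤ) : Pair n :=
  (fun k => ((lam k + (S (k + 1) - S k)) / 2).toNat,
    fun k => ((lam k - (S (k + 1) - S k)) / 2).toNat)

section ofIncrements

variable {lam : Fin n → ℕ} {S : ℕ → ℤ} (hS : ∀ k : Fin n, |S (k + 1) - S k| ≤ lam k)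
  (hpar : ∀ k : Fin n, Even ((lam k : ℤ) + (S (k + 1) - S k)))
include hS hpar

lemma ofIncrements_apply (k : Fin n) :
    (ofIncrements lam S).1 k + (ofIncrements lam S).2 k = lam k ∧
      ((ofIncrements lam S).1 k : ℤ) - (ofIncrements lam S).2 k = S (k + 1) - S k := by
  have := abs_le.1 (hS k)
  obtain ⟨m, hm⟩ := hpar k
  simp only [ofIncrements]
  omega

lemma ofIncrements_add : (ofIncrements lam S).1 + (ofIncrements lam S).2 = lam :=
  funext fun k => (ofIncrements_apply hS hpar k).1

lemma walk_ofIncrements {k : ℕ} (hk : k ≤ n) : walk (ofIncrements lam S) k = S k - S 0 := by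
  induction k with
  | zero => simp
  | succ k ih =>
    rw [walk_succ _ (by omega), ih (by omega), (ofIncrements_apply hS hpar ⟨k, by omega⟩).2]
    ring

end ofIncrements

/-- The type I cover at the gap above `c`: every height of the walk of `p` above `c` is lowered
by two. -/
def shrinkPair (p : Pair n) (c : ℤ) : Pair n :=
  ofIncrements (p.1 + p.2) fun k => shrink c (walk p k)

section shrinkPair

variable (p : Pair n) (c : ℤ)

lemma abs_shrink_walk_succ_sub_le (k : Fin n) :
    |shrink c (walk p (k + 1)) - shrink c (walk p k)| ≤ ((p.1 + p.2) k : ℕ) :=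
  (abs_shrink_sub_shrink_le c _ _).trans (abs_walk_succ_sub_le p k)

lemma even_shrink_walk_succ_sub (k : Fin n) :
    Even ((((p.1 + p.2) k : ℕ) : ℤ) + (shrink c (walk p (k + 1)) - shrink c (walk p k))) := by
  obtain ⟨a, ha⟩ := even_shrink_sub c (walk p (k + 1))
  obtain ⟨b, hb⟩ := even_shrink_sub c (walk p k)
  have := walk_succ p k.2
  simp only [Fin.eta, Pi.add_apply, Nat.cast_add] at this ⊢
  exact ⟨p.1 k + a - b, by omega⟩

lemma shrinkPair_add : (shrinkPair p c).1 + (shrinkPair p c).2 = p.1 + p.2 :=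
  ofIncrements_add (S := fun k => shrink c (walk p k)) (abs_shrink_walk_succ_sub_le p c)
    (even_shrink_walk_succ_sub p c)

lemma walk_shrinkPair {k : ℕ} (hk : k ≤ n) :
    walk (shrinkPair p c) k = shrink c (walk p k) - shrink c 0 := by
  have := walk_ofIncrements (S := fun k => shrink c (walk p k))
    (abs_shrink_walk_succ_sub_le p c) (even_shrink_walk_succ_sub p c) hk
  rwa [walk_zero] at this

lemma walk_shrinkPair_sub {k l : ℕ} (hk : k ≤ n) (hl : l ≤ n) :
    walk (shrinkPair p c) l - walk (shrinkPair p c) k =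
      shrink c (walk p l) - shrink c (walk p k) := by
  rw [walk_shrinkPair p c hk, walk_shrinkPair p c hl]
  ring

lemma contracts_shrinkPair : Contracts p (shrinkPair p c) := fun k hk l hl => by
  rw [walk_shrinkPair_sub p c hk hl]
  exact abs_shrink_sub_shrink_le c _ _

end shrinkPair

def heights (p : Pair n) : Finset ℤ := (range (n + 1)).image (walk p)

section heights

variable (p : Pair n)

lemma walk_mem_heights {k : ℕ} (hk : k ≤ n) : walk p k ∈ heights p :=
  mem_image_of_mem _ (mem_range.2 (Nat.lt_succ_of_le hk))

lemma zero_mem_heights : 0 ∈ heights p := by simpa using walk_mem_heights p (Nat.zero_le n)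

lemma card_heights_le : (heights p).card ≤ n + 1 :=
  card_image_le.trans (card_range _).le

noncomputable def top : ℤ := (heights p).max' ⟨0, zero_mem_heights p⟩

noncomputable def bot : ℤ := (heights p).min' ⟨0, zero_mem_heights p⟩

noncomputable def timeOf (v : ℤ) : ℕ := if h : ∃ k ≤ n, walk p k = v then h.choose else 0

variable {p} in
lemma timeOf_spec {v : ℤ} (hv : v ∈ heights p) :
    timeOf p v ≤ n ∧ walk p (timeOf p v) = v := by
  have h : ∃ k ≤ n, walk p k = v := by
    obtain ⟨k, hk, rfl⟩ := mem_image.1 hv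
    exact ⟨k, Nat.lt_succ_iff.1 (mem_range.1 hk), rfl⟩
  rw [timeOf, dif_pos h]
  exact h.choose_spec

noncomputable def heightMap (q : Pair n) (v : ℤ) : ℤ := walk q (timeOf p v)

end heights

variable {lam : Fin n → ℕ} {p q q' : Pair n}

lemma walk_eq_heightMap (h : Contracts p q) {k : ℕ} (hk : k ≤ n) :
    walk q k = heightMap p q (walk p k) := by
  obtain ⟨ht, hw⟩ := timeOf_spec (walk_mem_heights p hk)
  have := h k hk _ ht
  rw [hw, sub_self, abs_zero, abs_nonpos_iff, sub_eq_zero] at this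
  exact this.symm

lemma heightMap_zero (h : Contracts p q) : heightMap p q 0 = 0 := by
  simpa using (walk_eq_heightMap h (Nat.zero_le n)).symm

lemma abs_heightMap_sub_le (h : Contracts p q) {u v : ℤ} (hu : u ∈ heights p)
    (hv : v ∈ heights p) : |heightMap p q v - heightMap p q u| ≤ |v - u| := by
  obtain ⟨hu₁, hu₂⟩ := timeOf_spec hu
  obtain ⟨hv₁, hv₂⟩ := timeOf_spec hv
  have := h _ hu₁ _ hv₁
  rwa [hu₂, hv₂] at this

lemma heightMap_self {v : ℤ} (hv : v ∈ heights p) : heightMap p p v = v := (timeOf_spec hv).2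

lemma heightMap_swap (v : ℤ) : heightMap p q.swap v = -heightMap p q v := walk_swap _ _

lemma even_heightMap_sub (h : p.1 + p.2 = q.1 + q.2) {v : ℤ} (hv : v ∈ heights p) :
    Even (heightMap p q v - v) := by
  have := even_walk_sub_walk h (timeOf p v)
  rwa [(timeOf_spec hv).2] at this

/-- A gap is represented by its lower end `u`; its upper end is `nextAbove (heights p) u`. -/
noncomputable def gaps (p : Pair n) : Finset ℤ := (heights p).erase (top p)

lemma card_gaps (p : Pair n) : (gaps p).card = (heights p).card - 1 :=
  card_erase_of_mem (max'_mem _ _)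

lemma nextAbove_spec_of_mem_gaps {u : ℤ} (hu : u ∈ gaps p) :
    nextAbove (heights p) u ∈ heights p ∧ u < nextAbove (heights p) u ∧
      ∀ c ∈ heights p, u < c → nextAbove (heights p) u ≤ c := by
  obtain ⟨hne, hu⟩ := mem_erase.1 hu
  exact nextAbove_spec (max'_mem _ _) ((le_max' _ u hu).lt_of_ne hne)

noncomputable def rise (p q : Pair n) (u : ℤ) : ℤ :=
  heightMap p q (nextAbove (heights p) u) - heightMap p q u

lemma rise_self {u : ℤ} (hu : u ∈ gaps p) : rise p p u = nextAbove (heights p) u - u := by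
  rw [rise, heightMap_self (nextAbove_spec_of_mem_gaps hu).1,
    heightMap_self (mem_of_mem_erase hu)]

lemma rise_self_pos {u : ℤ} (hu : u ∈ gaps p) : 0 < rise p p u := by
  rw [rise_self hu]
  exact sub_pos.2 (nextAbove_spec_of_mem_gaps hu).2.1

lemma abs_rise_le (h : Contracts p q) {u : ℤ} (hu : u ∈ gaps p) :
    |rise p q u| ≤ rise p p u := by
  rw [rise_self hu, ← abs_of_pos (sub_pos.2 (nextAbove_spec_of_mem_gaps hu).2.1)]
  exact abs_heightMap_sub_le h (mem_of_mem_erase hu) (nextAbove_spec_of_mem_gaps hu).1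

lemma even_rise_sub (h : p.1 + p.2 = q.1 + q.2) {u : ℤ} (hu : u ∈ gaps p) :
    Even (rise p q u - rise p p u) := by
  obtain ⟨a, ha⟩ := even_heightMap_sub h (nextAbove_spec_of_mem_gaps hu).1
  obtain ⟨b, hb⟩ := even_heightMap_sub h (mem_of_mem_erase hu)
  rw [rise_self hu, rise]
  exact ⟨a - b, by omega⟩

lemma rise_swap (u : ℤ) : rise p q.swap u = -rise p q u := by
  simp only [rise, heightMap_swap]
  ring

def Tight (p q : Pair n) : Prop := ∀ u ∈ gaps p, |rise p q u| = rise p p u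

noncomputable def pattern (p q : Pair n) (u : ℤ) : Bool := decide (0 < rise p q u)

lemma tight_self : Tight p p := fun _ hu => abs_of_pos (rise_self_pos hu)

lemma pattern_self {u : ℤ} (hu : u ∈ gaps p) : pattern p p u = true :=
  decide_eq_true (rise_self_pos hu)

lemma tight_swap (h : Tight p q) : Tight p q.swap := fun u hu => by
  rw [rise_swap, abs_neg, h u hu]

lemma eq_of_forall_rise_eq (hsum : q.1 + q.2 = q'.1 + q'.2) (hq : Contracts p q)
    (hq' : Contracts p q') (h : ∀ u ∈ gaps p, rise p q u = rise p q' u) : q = q' := by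
  have hconst := eq_max'_of_apply_nextAbove_eq (s := heights p) ⟨0, zero_mem_heights p⟩
    (d := fun v => heightMap p q v - heightMap p q' v) fun u hu => by
      have := h u hu
      simp only [rise] at this
      linarith
  have h₀ := hconst 0 (zero_mem_heights p)
  simp only [heightMap_zero hq, heightMap_zero hq', sub_zero] at h₀
  refine eq_of_walk_eq hsum fun k hk => ?_
  have := hconst _ (walk_mem_heights p hk)
  rw [walk_eq_heightMap hq hk, walk_eq_heightMap hq' hk]
  linarith

lemma eq_of_forall_pattern_eq (hsum : q.1 + q.2 = q'.1 + q'.2) (hq : Contracts p q)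
    (hq' : Contracts p q') (ht : Tight p q) (ht' : Tight p q')
    (h : ∀ u ∈ gaps p, pattern p q u = pattern p q' u) : q = q' := by
  refine eq_of_forall_rise_eq hsum hq hq' fun u hu => ?_
  have h₁ := ht u hu
  have h₂ := ht' u hu
  have hpos := rise_self_pos hu
  have hsign := h u hu
  simp only [pattern, decide_eq_decide] at hsign
  cases abs_cases (rise p q u) <;> cases abs_cases (rise p q' u) <;> omega

lemma abs_rise_le_sub_two (h : p.1 + p.2 = q.1 + q.2) (hq : Contracts p q) {u : ℤ}
    (hu : u ∈ gaps p) (hne : |rise p q u| ≠ rise p p u) : |rise p q u| ≤ rise p p u - 2 := by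
  have hle := abs_rise_le hq hu
  obtain ⟨a, ha⟩ := even_rise_sub h hu
  cases abs_cases (rise p q u) <;> omega

/-- For an increment of `p` crossing the gap, bound the one of `q` by the two pieces outside the
gap plus `|rise p q u|`. -/
lemma contracts_shrinkPair_of_abs_rise_le (hq : Contracts p q) {u : ℤ} (hu : u ∈ gaps p)
    (hrise : |rise p q u| ≤ rise p p u - 2) : Contracts (shrinkPair p u) q := by
  obtain ⟨hnext, hlt, hmin⟩ := nextAbove_spec_of_mem_gaps hu
  have hu' := mem_of_mem_erase hu
  have cross : ∀ a ≤ n, ∀ b ≤ n, walk p a ≤ u → u < walk p b →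
      |walk q b - walk q a| ≤ shrink u (walk p b) - shrink u (walk p a) := by
    intro a ha b hb hau hub
    set g := heightMap p q
    set v := nextAbove (heights p) u
    have h₁ := abs_heightMap_sub_le hq hnext (walk_mem_heights p hb)
    have h₂ := abs_heightMap_sub_le hq (walk_mem_heights p ha) hu'
    rw [abs_of_nonneg (sub_nonneg.2 (hmin _ (walk_mem_heights p hb) hub))] at h₁
    rw [abs_of_nonneg (sub_nonneg.2 hau)] at h₂
    rw [rise_self hu, rise] at hrise
    rw [walk_eq_heightMap hq ha, walk_eq_heightMap hq hb, shrink_sub_shrink_of_le_of_lt hau hub]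
    calc |g (walk p b) - g (walk p a)|
        ≤ |g (walk p b) - g v| + (|g v - g u| + |g u - g (walk p a)|) :=
          (abs_sub_le _ (g v) _).trans (add_le_add_right (abs_sub_le _ (g u) _) _)
      _ ≤ walk p b - walk p a - 2 := by linarith
  intro k hk l hl
  rw [walk_shrinkPair_sub p u hk hl]
  rcases le_or_gt (walk p k) u with hku | hku <;> rcases le_or_gt (walk p l) u with hlu | hlu
  · rw [shrink_sub_shrink_of_le hlu hku]
    exact hq k hk l hl
  · exact (cross k hk l hl hku hlu).trans (le_abs_self _)
  · rw [abs_sub_comm, abs_sub_comm (shrink u _)]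
    exact (cross l hl k hk hlu hku).trans (le_abs_self _)
  · rw [shrink_sub_shrink_of_lt hlu hku]
    exact hq k hk l hl

lemma not_contracts_shrinkPair {u : ℤ} (hu : u ∈ gaps p) (h₂ : 2 ≤ rise p p u) :
    ¬ Contracts (shrinkPair p u) p := by
  obtain ⟨hnext, hlt, -⟩ := nextAbove_spec_of_mem_gaps hu
  obtain ⟨hk, hwk⟩ := timeOf_spec (mem_of_mem_erase hu)
  obtain ⟨hl, hwl⟩ := timeOf_spec hnext
  intro h
  have := h _ hk _ hl
  rw [walk_shrinkPair_sub p u hk hl, hwk, hwl, shrink_sub_shrink_of_le_of_lt le_rfl hlt] at this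
  rw [rise_self hu] at h₂
  rw [abs_of_nonneg (by omega), abs_of_nonneg (by omega)] at this
  omega

/-- `shrinkPair p u` lies strictly above `p` and below `q`, so the cover property forces
`q ⊴ shrinkPair p u`. -/
lemma exists_sym2_eq_shrinkPair_of_not_tight (hp : p.1 + p.2 = lam) (hcov : pcover lam p q)
    (ht : ¬ Tight p q) :
    ∃ u ∈ gaps p, s(q.1, q.2) = s((shrinkPair p u).1, (shrinkPair p u).2) := by
  obtain ⟨-, hq, hpq, -, hmin⟩ := hcov
  have hpq' : p.1 + p.2 = q.1 + q.2 := hp.trans hq.symm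
  rw [ple_iff_contracts hpq'] at hpq
  simp only [Tight, not_forall] at ht
  obtain ⟨u, hu, hne⟩ := ht
  have hrise := abs_rise_le_sub_two hpq' hpq hu hne
  have hr : (shrinkPair p u).1 + (shrinkPair p u).2 = lam := (shrinkPair_add p u).trans hp
  have hrq := contracts_shrinkPair_of_abs_rise_le hpq hu hrise
  rcases hmin _ hr ((ple_iff_contracts (hp.trans hr.symm)).2 (contracts_shrinkPair p u))
      ((ple_iff_contracts (hr.trans hq.symm)).2 hrq) with hrp | hqr
  · exact absurd ((ple_iff_contracts (hr.trans hp.symm)).1 hrp)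
      (not_contracts_shrinkPair hu (by have := abs_nonneg (rise p q u); omega))
  · exact ⟨u, hu, sym2_eq_of_contracts (hq.trans hr.symm)
      ((ple_iff_contracts (hq.trans hr.symm)).1 hqr) hrq⟩

lemma ple_swap_left : ple q.swap p ↔ ple q p := by
  simp only [ple, Prod.fst_swap, Prod.snd_swap, min_comm]

lemma ple_swap_right : ple p q.swap ↔ ple p q := by
  simp only [ple, Prod.fst_swap, Prod.snd_swap, min_comm]

lemma pcover_swap (h : pcover lam p q) : pcover lam p q.swap := by
  obtain ⟨hp, hq, hpq, hqp, hmin⟩ := h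
  refine ⟨hp, by rw [Prod.fst_swap, Prod.snd_swap, add_comm, hq], ple_swap_right.2 hpq,
    fun h => hqp (ple_swap_left.1 h), fun r hr hpr hrq => ?_⟩
  rw [ple_swap_left]
  exact hmin r hr hpr (ple_swap_right.1 hrq)

lemma contracts_of_pcover (h : pcover lam p q) : p.1 + p.2 = q.1 + q.2 ∧ Contracts p q := by
  obtain ⟨hp, hq, hpq, -⟩ := h
  exact ⟨hp.trans hq.symm, (ple_iff_contracts (hp.trans hq.symm)).1 hpq⟩

lemma bot_mem_gaps (hcard : 2 ≤ (heights p).card) : bot p ∈ gaps p :=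
  mem_erase.2 ⟨(min'_lt_max'_of_card _ hcard).ne, min'_mem _ _⟩

/-- The type II covers, each swapped if necessary so as to go up across the lowest gap. -/
def tightCovers (lam : Fin n → ℕ) (p : Pair n) : Set (Pair n) :=
  {q | pcover lam p q ∧ Tight p q ∧ pattern p q (bot p) = true}

lemma exists_mem_tightCovers (hcard : 2 ≤ (heights p).card) (hcov : pcover lam p q)
    (ht : Tight p q) : ∃ q' ∈ tightCovers lam p, s(q.1, q.2) = s(q'.1, q'.2) := by
  have hbot := bot_mem_gaps hcard
  by_cases hup : pattern p q (bot p) = true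
  · exact ⟨q, ⟨hcov, ht, hup⟩, rfl⟩
  refine ⟨q.swap, ⟨pcover_swap hcov, tight_swap ht, ?_⟩, Sym2.eq_swap⟩
  have := ht _ hbot
  have := rise_self_pos hbot
  simp only [pattern, decide_eq_true_eq, rise_swap, not_lt] at hup ⊢
  cases abs_cases (rise p q (bot p)) <;> omega

lemma finite_setOf_add_eq (lam : Fin n → ℕ) :
    {q : Pair n | q.1 + q.2 = lam}.Finite :=
  ((Set.finite_Iic lam).prod (Set.finite_Iic lam)).subset fun q (hq : q.1 + q.2 = lam) =>
    ⟨Set.mem_Iic.2 (hq ▸ le_self_add), Set.mem_Iic.2 (hq ▸ le_add_self)⟩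

/-- A cover in `tightCovers` is determined by its pattern on the gaps other than the lowest,
and that pattern is not constantly `true`, which is the pattern of `p` itself. -/
lemma ncard_tightCovers_le (hcard : 2 ≤ (heights p).card) :
    (tightCovers lam p).ncard ≤ 2 ^ ((heights p).card - 2) - 1 := by
  have hbot := bot_mem_gaps hcard
  let K := (gaps p).erase (bot p)
  have hK : K.card = (heights p).card - 2 := by
    rw [card_erase_of_mem hbot, card_gaps]
    omega
  have hpattern : ∀ q ∈ tightCovers lam p, ∀ q' : Pair n,
      pattern p q' (bot p) = true → (∀ v : K, pattern p q v = pattern p q' v) →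
      ∀ u ∈ gaps p, pattern p q u = pattern p q' u := by
    intro q hq q' hq' h u hu
    by_cases hub : u = bot p
    · rw [hub, hq.2.2, hq']
    · exact h ⟨u, mem_erase.2 ⟨hub, hu⟩⟩
  have hmaps : ∀ q ∈ tightCovers lam p, (fun v : K => pattern p q v) ∈
      (Set.univ \ {fun _ => true} : Set (K → Bool)) := by
    intro q hq
    refine ⟨Set.mem_univ _, fun htrue => ?_⟩
    obtain ⟨hsum, hpq⟩ := contracts_of_pcover hq.1
    have hqp : q = p := eq_of_forall_pattern_eq hsum.symm hpq (contracts_refl p) hq.2.1 tight_self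
      (hpattern q hq p (pattern_self hbot) fun v => by
        rw [congrFun htrue v, pattern_self (mem_of_mem_erase v.2)])
    exact hq.1.2.2.2.1 (hqp ▸ (ple_iff_contracts rfl).2 (contracts_refl q))
  have hinj : Set.InjOn (fun q (v : K) => pattern p q v) (tightCovers lam p) := by
    intro q hq q' hq' h
    obtain ⟨hsum, hpq⟩ := contracts_of_pcover hq.1
    obtain ⟨hsum', hpq'⟩ := contracts_of_pcover hq'.1
    exact eq_of_forall_pattern_eq (hsum.symm.trans hsum') hpq hpq' hq.2.1 hq'.2.1
      (hpattern q hq q' hq'.2.2 (congrFun h))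
  refine (Set.ncard_le_ncard_of_injOn _ hmaps hinj).trans_eq ?_
  rw [Set.ncard_sdiff_singleton_of_mem (Set.mem_univ _), Set.ncard_univ, Nat.card_eq_fintype_card,
    Fintype.card_fun, Fintype.card_bool, Fintype.card_coe, hK]

lemma not_pcover_of_card_heights_lt_two (hcard : (heights p).card < 2) : ¬ pcover lam p q := by
  rintro ⟨hp, hq, -, hqp, -⟩
  have hzero : ∀ k ≤ n, walk p k = 0 := fun k hk =>
    card_le_one.1 (by omega) _ (walk_mem_heights p hk) _ (zero_mem_heights p)
  refine hqp ((ple_iff_contracts (hq.trans hp.symm)).2 fun k hk l hl => ?_)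
  rw [hzero k hk, hzero l hl, sub_zero, abs_zero]
  exact abs_nonneg _

end PairCovers

open PairCovers in
theorem stmt_15_general (n : ℕ) (lam : Fin n → ℕ)
    (p : (Fin n → ℕ) × (Fin n → ℕ)) (hp : p.1 + p.2 = lam) :
    Set.ncard {x : Sym2 (Fin n → ℕ) |
        ∃ q : (Fin n → ℕ) × (Fin n → ℕ), x = Sym2.mk q.1 q.2 ∧ pcover lam p q} ≤
      n + 2 ^ (n - 1) - 1 := by
  by_cases hcard : (heights p).card < 2
  · simp [not_pcover_of_card_heights_lt_two hcard]
  push Not at hcard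
  have hsub : {x : Sym2 (Fin n → ℕ) | ∃ q, x = s(q.1, q.2) ∧ pcover lam p q} ⊆
      (fun u => s((shrinkPair p u).1, (shrinkPair p u).2)) '' (gaps p : Set ℤ) ∪
        (fun q => s(q.1, q.2)) '' tightCovers lam p := by
    rintro x ⟨q, rfl, hcov⟩
    by_cases ht : Tight p q
    · obtain ⟨q', hq', he⟩ := exists_mem_tightCovers hcard hcov ht
      exact Or.inr ⟨q', hq', he.symm⟩
    · obtain ⟨u, hu, he⟩ := exists_sym2_eq_shrinkPair_of_not_tight hp hcov ht
      exact Or.inl ⟨u, hu, he.symm⟩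
  have hfin : (tightCovers lam p).Finite := (finite_setOf_add_eq lam).subset fun q hq => hq.1.2.1
  have hgaps := card_gaps p
  have hheights := card_heights_le p
  have hpow : 2 ^ ((heights p).card - 2) ≤ 2 ^ (n - 1) := Nat.pow_le_pow_right two_pos (by omega)
  have htight := ncard_tightCovers_le (lam := lam) hcard
  calc _ ≤ _ := Set.ncard_le_ncard hsub ((Set.toFinite _).union (hfin.image _))
    _ ≤ _ := Set.ncard_union_le _ _
    _ ≤ (gaps p).card + (tightCovers lam p).ncard :=
      add_le_add ((Set.ncard_image_le (Set.toFinite _)).trans (Set.ncard_coe_finset _).le)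
        (Set.ncard_image_le hfin)
    _ ≤ n + 2 ^ (n - 1) - 1 := by have := Nat.one_le_two_pow (n := n - 1); omega

/-- Any element of `𝒫⁺(λ,2)/∼` has at most `n + 2^{n-1} - 1` covers
(at most `n` of type I and at most `2^{n-1} - 1` of type II). -/
theorem stmt_15 (n : ℕ) (hn : 1 ≤ n) (lam : Fin n → ℕ)
    (p : (Fin n → ℕ) × (Fin n → ℕ)) (hp : p.1 + p.2 = lam) :
    Set.ncard {x : Sym2 (Fin n → ℕ) |
        ∃ q : (Fin n → ℕ) × (Fin n → ℕ), x = Sym2.mk q.1 q.2 ∧ pcover lam p q} ≤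
      n + 2 ^ (n - 1) - 1 :=
  stmt_15_general n lam p hp
end

section
/- Let a, b, n, m be nonnegative integers with n − a ≤ a and m − b ≤ b, and suppose n − a < a (shifted weights positive: all of a, n−a, a+2b, n−a+2(m−b) positive). Then a(n−a)(a+2b)(n−a+2(m−b)) ≤ (a−1)(n−a+1)(a−1+2b)(n−a+1+2(m−b)). -/
theorem stmt_16 (a b n m : ℕ) (han : a ≤ n) (hbm : b ≤ m)
    (h1 : n - a ≤ a) (h2 : m - b ≤ b) (h3 : n - a < a)
    (hp1 : 0 < a) (hp2 : 0 < n - a) (hp3 : 0 < a + 2 * b)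
    (hp4 : 0 < n - a + 2 * (m - b)) :
    a * (n - a) * (a + 2 * b) * (n - a + 2 * (m - b)) ≤
      (a - 1) * (n - a + 1) * (a - 1 + 2 * b) * (n - a + 1 + 2 * (m - b)) := by
  set c := n - a with hc
  set d := m - b with hd
  obtain ⟨a', rfl⟩ : ∃ a', a = a' + 1 := ⟨a - 1, (Nat.succ_pred_eq_of_pos hp1).symm⟩
  simp only [Nat.add_sub_cancel]
  have h3' : c + 1 ≤ a' + 1 := h3
  have h1 : a' * (c + 1) ≤ a' * (c + 1) := le_refl _
  have key1 : (a' + 1) * c ≤ a' * (c + 1) := by nlinarith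
  have key2 : (a' + 1 + 2 * b) * (c + 2 * d) ≤ (a' + 2 * b) * (c + 1 + 2 * d) := by nlinarith
  calc (a' + 1) * c * (a' + 1 + 2 * b) * (c + 2 * d)
      = ((a' + 1) * c) * ((a' + 1 + 2 * b) * (c + 2 * d)) := by ring
    _ ≤ (a' * (c + 1)) * ((a' + 2 * b) * (c + 1 + 2 * d)) := Nat.mul_le_mul key1 key2
    _ = a' * (c + 1) * (a' + 2 * b) * (c + 1 + 2 * d) := by ring
end

section
/- Let 𝔤 = sp_4 (type C_2) with fundamental weights ω_1, ω_2, and let λ ∈ ℤ_{≥0}². If (λ_1, λ_2) ⊴ (μ_1, μ_2) in 𝒫⁺(λ,2), then dim V(λ_1) · dim V(λ_2) ≤ dim V(μ_1) · dim V(μ_2), where for ν = aω_1 + bω_2, dim V(ν) = (a+1)(b+1)(a+b+2)(a+2b+3)/6. -/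
set_option maxHeartbeats 1000000
set_option linter.all false

lemma mulmin (x y u v : ℕ) (hs : x + y = u + v) (h : min x y ≤ min u v) :
    x * y ≤ u * v := by
  rcases le_total x y with hx | hx <;> rcases le_total u v with hu | hu
  · rw [min_eq_left hx, min_eq_left hu] at h; nlinarith
  · rw [min_eq_left hx, min_eq_right hu] at h; nlinarith
  · rw [min_eq_right hx, min_eq_left hu] at h; nlinarith
  · rw [min_eq_right hx, min_eq_right hu] at h; nlinarith

lemma key (S T p1 p2 p3 q1 q2 q3 : ℚ) (hS : 0 ≤ S) (hT : 0 ≤ T)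
    (h1 : 0 ≤ p1) (h2 : 0 ≤ p2) (hp13 : p1 ≤ p3) (hq13 : q1 ≤ q3)
    (e1 : p1 ≤ q1) (e2 : p2 ≤ q2) (e3 : p3 ≤ q3) :
    (p1+S+1)*(p2+T+1)*(p3+2*S+2*T+4)*(2*p3+2*p2-p1+3*S+6*T+9)
      ≤ (q1+S+1)*(q2+T+1)*(q3+2*S+2*T+4)*(2*q3+2*q2-q1+3*S+6*T+9) := by
  have hq1 : 0 ≤ q1 := le_trans h1 e1
  have hq2 : 0 ≤ q2 := le_trans h2 e2
  have hp3 : 0 ≤ p3 := le_trans h1 hp13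
  have hq3 : 0 ≤ q3 := le_trans hp3 e3
  have hA : (0:ℚ) ≤ p1 + S + 1 := by linarith
  have hB : (0:ℚ) ≤ p2 + T + 1 := by linarith
  have step1 : (p1+S+1)*(p2+T+1)*(p3+2*S+2*T+4)*(2*p3+2*p2-p1+3*S+6*T+9)
      ≤ (p1+S+1)*(p2+T+1)*(q3+2*S+2*T+4)*(2*q3+2*p2-p1+3*S+6*T+9) := by
    have s1 : (p3+2*S+2*T+4)*(2*p3+2*p2-p1+3*S+6*T+9)
        ≤ (q3+2*S+2*T+4)*(2*q3+2*p2-p1+3*S+6*T+9) := by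
      nlinarith [mul_nonneg (sub_nonneg.2 e3)
        (show (0:ℚ) ≤ 2*(q3+p3)+2*p2-p1+3*S+6*T+9+2*(2*S+2*T+4) by linarith)]
    have := mul_le_mul_of_nonneg_left s1 (mul_nonneg hA hB)
    linarith [this]
  have step2 : (p1+S+1)*(p2+T+1)*(q3+2*S+2*T+4)*(2*q3+2*p2-p1+3*S+6*T+9)
      ≤ (p1+S+1)*(q2+T+1)*(q3+2*S+2*T+4)*(2*q3+2*q2-p1+3*S+6*T+9) := by
    have s2 : (p2+T+1)*(2*q3+2*p2-p1+3*S+6*T+9)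
        ≤ (q2+T+1)*(2*q3+2*q2-p1+3*S+6*T+9) := by
      nlinarith [mul_nonneg (sub_nonneg.2 e2)
        (show (0:ℚ) ≤ 2*(q2+p2)+2*q3-p1+3*S+6*T+9+2*(T+1) by linarith)]
    have := mul_le_mul_of_nonneg_left s2
      (mul_nonneg hA (show (0:ℚ) ≤ q3+2*S+2*T+4 by linarith))
    linarith [this]
  have step3 : (p1+S+1)*(q2+T+1)*(q3+2*S+2*T+4)*(2*q3+2*q2-p1+3*S+6*T+9)
      ≤ (q1+S+1)*(q2+T+1)*(q3+2*S+2*T+4)*(2*q3+2*q2-q1+3*S+6*T+9) := by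
    have s3 : (p1+S+1)*(2*q3+2*q2-p1+3*S+6*T+9)
        ≤ (q1+S+1)*(2*q3+2*q2-q1+3*S+6*T+9) := by
      nlinarith [mul_nonneg (sub_nonneg.2 e1)
        (show (0:ℚ) ≤ 2*q3+2*q2-(p1+q1)+3*S+6*T+9-(S+1) by linarith)]
    have := mul_le_mul_of_nonneg_left s3
      (mul_nonneg (show (0:ℚ) ≤ q2+T+1 by linarith)
        (show (0:ℚ) ≤ q3+2*S+2*T+4 by linarith))
    linarith [this]
  linarith


/-- Weyl dimension of the simple `sp₄` (type `C₂`) module of highest weight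
`a·ω₁ + b·ω₂`. -/
def dimC2 (v : ℕ × ℕ) : ℚ :=
  (v.1 + 1) * (v.2 + 1) * (v.1 + v.2 + 2) * (v.1 + 2 * v.2 + 3) / 6

theorem stmt_18 (lam lam₁ lam₂ mu₁ mu₂ : ℕ × ℕ)
    (hlam : lam₁ + lam₂ = lam) (hmu : mu₁ + mu₂ = lam)
    (h1 : min lam₁.1 lam₂.1 ≤ min mu₁.1 mu₂.1)
    (h2 : min lam₁.2 lam₂.2 ≤ min mu₁.2 mu₂.2)
    (h12 : min (lam₁.1 + lam₁.2) (lam₂.1 + lam₂.2) ≤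
      min (mu₁.1 + mu₁.2) (mu₂.1 + mu₂.2)) :
    dimC2 lam₁ * dimC2 lam₂ ≤ dimC2 mu₁ * dimC2 mu₂ := by
  have hsum := hlam.trans hmu.symm
  have hs1 : lam₁.1 + lam₂.1 = mu₁.1 + mu₂.1 := congrArg Prod.fst hsum
  have hs2 : lam₁.2 + lam₂.2 = mu₁.2 + mu₂.2 := congrArg Prod.snd hsum
  have k1 := mulmin _ _ _ _ hs1 h1
  have k2 := mulmin _ _ _ _ hs2 h2
  have k3 := mulmin _ _ _ _ (by omega) h12
  have ha : (0:ℚ) ≤ (lam₁.1:ℚ) := Nat.cast_nonneg _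
  have hb : (0:ℚ) ≤ (lam₁.2:ℚ) := Nat.cast_nonneg _
  have ha' : (0:ℚ) ≤ (lam₂.1:ℚ) := Nat.cast_nonneg _
  have hb' : (0:ℚ) ≤ (lam₂.2:ℚ) := Nat.cast_nonneg _
  have hc : (0:ℚ) ≤ (mu₁.1:ℚ) := Nat.cast_nonneg _
  have hd : (0:ℚ) ≤ (mu₁.2:ℚ) := Nat.cast_nonneg _
  have hc' : (0:ℚ) ≤ (mu₂.1:ℚ) := Nat.cast_nonneg _
  have hd' : (0:ℚ) ≤ (mu₂.2:ℚ) := Nat.cast_nonneg _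
  have e1 : (lam₁.1:ℚ) * (lam₂.1:ℚ) ≤ (mu₁.1:ℚ) * (mu₂.1:ℚ) := by exact_mod_cast k1
  have e2 : (lam₁.2:ℚ) * (lam₂.2:ℚ) ≤ (mu₁.2:ℚ) * (mu₂.2:ℚ) := by exact_mod_cast k2
  have e3 : ((lam₁.1:ℚ) + lam₁.2) * ((lam₂.1:ℚ) + lam₂.2)
      ≤ ((mu₁.1:ℚ) + mu₁.2) * ((mu₂.1:ℚ) + mu₂.2) := by exact_mod_cast k3
  have hq1 : (mu₁.1:ℚ) + (mu₂.1:ℚ) = (lam₁.1:ℚ) + (lam₂.1:ℚ) := by exact_mod_cast hs1.symm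
  have hq2 : (mu₁.2:ℚ) + (mu₂.2:ℚ) = (lam₁.2:ℚ) + (lam₂.2:ℚ) := by exact_mod_cast hs2.symm
  have hp13 : (lam₁.1:ℚ) * (lam₂.1:ℚ) ≤ ((lam₁.1:ℚ) + lam₁.2) * ((lam₂.1:ℚ) + lam₂.2) := by
    nlinarith [mul_nonneg ha hb', mul_nonneg hb ha', mul_nonneg hb hb']
  have hq13 : (mu₁.1:ℚ) * (mu₂.1:ℚ) ≤ ((mu₁.1:ℚ) + mu₁.2) * ((mu₂.1:ℚ) + mu₂.2) := by
    nlinarith [mul_nonneg hc hd', mul_nonneg hd hc', mul_nonneg hd hd']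
  have main := key ((lam₁.1:ℚ) + lam₂.1) ((lam₁.2:ℚ) + lam₂.2)
      ((lam₁.1:ℚ) * lam₂.1) ((lam₁.2:ℚ) * lam₂.2)
      (((lam₁.1:ℚ) + lam₁.2) * ((lam₂.1:ℚ) + lam₂.2))
      ((mu₁.1:ℚ) * mu₂.1) ((mu₁.2:ℚ) * mu₂.2)
      (((mu₁.1:ℚ) + mu₁.2) * ((mu₂.1:ℚ) + mu₂.2))
      (by linarith) (by linarith) (mul_nonneg ha ha') (mul_nonneg hb hb')
      hp13 hq13 e1 e2 e3
  have hceq : (mu₂.1:ℚ) = (lam₁.1:ℚ) + (lam₂.1:ℚ) - (mu₁.1:ℚ) := by linarith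
  have hdeq : (mu₂.2:ℚ) = (lam₁.2:ℚ) + (lam₂.2:ℚ) - (mu₁.2:ℚ) := by linarith
  simp only [dimC2]
  rw [div_mul_div_comm, div_mul_div_comm,
    div_le_div_iff₀ (by norm_num) (by norm_num)]
  rw [hceq, hdeq] at main ⊢
  rw [← sub_nonneg] at main ⊢
  convert mul_nonneg (by norm_num : (0:ℚ) ≤ 36) main using 1
  ring
end

section
/- Let D(ν) for ν = (a,b) ∈ ℤ_{≥0}² denote the C_2 Weyl dimension polynomial D(a,b) = (a+1)(b+1)(a+b+2)(a+2b+3)/6. For any N, M ≥ 0 and any pair (λ_1,λ_2) of dominant weights with λ_1+λ_2 = Nω_1+Mω_2, one has D(λ_1)·D(λ_2) ≤ D(λ^max_1)·D(λ^max_2), where (λ^max_1, λ^max_2) is the unique (up to swap) pair maximal for ⊴ (its ε-coordinate differences lie in {0,1}); equality holds iff (λ_1,λ_2) is a permutation of (λ^max_1,λ^max_2). -/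
/-- Auxiliary integer polynomial: `9216 * D(λ₁) * D(λ₂)` in terms of the
sums `S, T` and differences `d, e` of the shifted `ε`-coordinates. -/
def auxPhi (S T d e : ℤ) : ℤ :=
  (S ^ 2 - d ^ 2) * (T ^ 2 - e ^ 2) * ((S + T) ^ 2 - (d + e) ^ 2) *
    ((S - T) ^ 2 - (d - e) ^ 2)

lemma aux_le4 {a1 a2 a3 a4 b1 b2 b3 b4 : ℤ}
    (h1 : a1 ≤ b1) (h2 : a2 ≤ b2) (h3 : a3 ≤ b3) (h4 : a4 ≤ b4)
    (p1 : 0 < a1) (p2 : 0 < a2) (p3 : 0 < a3) (p4 : 0 < a4) :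
    a1 * a2 * a3 * a4 ≤ b1 * b2 * b3 * b4 := by
  have q1 : 0 < b1 := lt_of_lt_of_le p1 h1
  have q2 : 0 < b2 := lt_of_lt_of_le p2 h2
  have q3 : 0 < b3 := lt_of_lt_of_le p3 h3
  exact mul_le_mul (mul_le_mul (mul_le_mul h1 h2 p2.le q1.le) h3 p3.le (by positivity))
    h4 p4.le (by positivity)

lemma aux_lt4₁ {a1 a2 a3 a4 b1 b2 b3 b4 : ℤ}
    (h1 : a1 < b1) (h2 : a2 ≤ b2) (h3 : a3 ≤ b3) (h4 : a4 ≤ b4)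
    (p1 : 0 < a1) (p2 : 0 < a2) (p3 : 0 < a3) (p4 : 0 < a4) :
    a1 * a2 * a3 * a4 < b1 * b2 * b3 * b4 := by
  have q1 : 0 < b1 := lt_trans p1 h1
  have step1 : a1 * (a2 * a3 * a4) < b1 * (a2 * a3 * a4) :=
    mul_lt_mul_of_pos_right h1 (by positivity)
  have step2 : b1 * a2 * a3 * a4 ≤ b1 * b2 * b3 * b4 :=
    aux_le4 le_rfl h2 h3 h4 q1 p2 p3 p4
  calc a1 * a2 * a3 * a4 = a1 * (a2 * a3 * a4) := by ring
    _ < b1 * (a2 * a3 * a4) := step1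
    _ = b1 * a2 * a3 * a4 := by ring
    _ ≤ b1 * b2 * b3 * b4 := step2

lemma aux_lt4₂ {a1 a2 a3 a4 b1 b2 b3 b4 : ℤ}
    (h1 : a1 ≤ b1) (h2 : a2 < b2) (h3 : a3 ≤ b3) (h4 : a4 ≤ b4)
    (p1 : 0 < a1) (p2 : 0 < a2) (p3 : 0 < a3) (p4 : 0 < a4) :
    a1 * a2 * a3 * a4 < b1 * b2 * b3 * b4 := by
  calc a1 * a2 * a3 * a4 = a2 * a1 * a3 * a4 := by ring
    _ < b2 * b1 * b3 * b4 := aux_lt4₁ h2 h1 h3 h4 p2 p1 p3 p4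
    _ = b1 * b2 * b3 * b4 := by ring


lemma aux_sq_le {b x : ℤ} (h : b ≤ x ∨ x ≤ -b) (hb : 0 ≤ b) : b ^ 2 ≤ x ^ 2 := by
  rcases h with h | h <;> nlinarith

lemma aux_sq_pos {x y : ℤ} (h1 : 0 < x - y) (h2 : 0 < x + y) : 0 < x ^ 2 - y ^ 2 := by
  nlinarith [mul_pos h1 h2]

set_option maxHeartbeats 1600000 in
/-- Key inequality for `auxPhi`. -/
lemma aux_key (S T d e δ ε : ℤ) (hT : 2 ≤ T) (hST : T + 2 ≤ S)
    (hδ : δ = 0 ∨ δ = 1) (hε : ε = 0 ∨ ε = 1)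
    (hdp : 2 ∣ (d - δ)) (hep : 2 ∣ (e - ε))
    (he1 : -(T - 2) ≤ e) (he2 : e ≤ T - 2)
    (hm1 : -(S - T - 2) ≤ d - e) (hm2 : d - e ≤ S - T - 2) :
    auxPhi S T d e ≤ auxPhi S T δ ε ∧
      (auxPhi S T d e = auxPhi S T δ ε ↔ (d = δ ∧ e = ε) ∨ (d = -δ ∧ e = -ε)) := by
  have hd1 : -(S - 4) ≤ d := by linarith
  have hd2 : d ≤ S - 4 := by linarith
  have hp1 : -(S + T - 6) ≤ d + e := by linarith
  have hp2 : d + e ≤ S + T - 6 := by linarith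
  have P1 : 0 < S ^ 2 - d ^ 2 := aux_sq_pos (by linarith) (by linarith)
  have P2 : 0 < T ^ 2 - e ^ 2 := aux_sq_pos (by linarith) (by linarith)
  have P3 : 0 < (S + T) ^ 2 - (d + e) ^ 2 := aux_sq_pos (by linarith) (by linarith)
  have P4 : 0 < (S - T) ^ 2 - (d - e) ^ 2 := aux_sq_pos (by linarith) (by linarith)
  have main : auxPhi S T d e ≤ auxPhi S T δ ε ∧
      (¬((d = δ ∧ e = ε) ∨ (d = -δ ∧ e = -ε)) → auxPhi S T d e < auxPhi S T δ ε) := by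
    rcases hδ with rfl | rfl <;> rcases hε with rfl | rfl
    · -- δ = 0, ε = 0 : d, e even
      constructor
      · simp only [auxPhi]
        exact aux_le4 (by linarith [sq_nonneg d]) (by linarith [sq_nonneg e])
          (by linarith [sq_nonneg (d + e)]) (by linarith [sq_nonneg (d - e)]) P1 P2 P3 P4
      · intro hne
        simp only [auxPhi]
        rcases eq_or_ne d 0 with rfl | hd
        · have he : e ≠ 0 := fun h => hne (Or.inl ⟨rfl, h⟩)
          have h4e : (2:ℤ) ^ 2 ≤ e ^ 2 := aux_sq_le (by omega) (by norm_num)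
          exact aux_lt4₂ (by linarith [sq_nonneg (0:ℤ)]) (by linarith)
            (by linarith [sq_nonneg (0 + e)]) (by linarith [sq_nonneg (0 - e)]) P1 P2 P3 P4
        · have h4d : (2:ℤ) ^ 2 ≤ d ^ 2 := aux_sq_le (by omega) (by norm_num)
          exact aux_lt4₁ (by linarith) (by linarith [sq_nonneg e])
            (by linarith [sq_nonneg (d + e)]) (by linarith [sq_nonneg (d - e)]) P1 P2 P3 P4
    · -- δ = 0, ε = 1 : d even, e odd
      have h1e : (1:ℤ) ^ 2 ≤ e ^ 2 := aux_sq_le (by omega) (by norm_num)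
      have h1p : (1:ℤ) ^ 2 ≤ (d + e) ^ 2 := aux_sq_le (by omega) (by norm_num)
      have h1m : (1:ℤ) ^ 2 ≤ (d - e) ^ 2 := aux_sq_le (by omega) (by norm_num)
      constructor
      · simp only [auxPhi]
        exact aux_le4 (by linarith [sq_nonneg d]) (by linarith)
          (by linarith) (by linarith) P1 P2 P3 P4
      · intro hne
        simp only [auxPhi]
        rcases eq_or_ne d 0 with rfl | hd
        · have he : e ≠ 1 ∧ e ≠ -1 := by
            constructor <;> intro h
            · exact hne (Or.inl ⟨rfl, h⟩)
            · exact hne (Or.inr ⟨by norm_num, h⟩)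
          have h9e : (3:ℤ) ^ 2 ≤ e ^ 2 := aux_sq_le (by omega) (by norm_num)
          exact aux_lt4₂ (by linarith [sq_nonneg (0:ℤ)]) (by linarith)
            (by linarith) (by linarith) P1 P2 P3 P4
        · have h4d : (2:ℤ) ^ 2 ≤ d ^ 2 := aux_sq_le (by omega) (by norm_num)
          exact aux_lt4₁ (by linarith) (by linarith)
            (by linarith) (by linarith) P1 P2 P3 P4
    · -- δ = 1, ε = 0 : d odd, e even
      have h1d : (1:ℤ) ^ 2 ≤ d ^ 2 := aux_sq_le (by omega) (by norm_num)
      have h1p : (1:ℤ) ^ 2 ≤ (d + e) ^ 2 := aux_sq_le (by omega) (by norm_num)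
      have h1m : (1:ℤ) ^ 2 ≤ (d - e) ^ 2 := aux_sq_le (by omega) (by norm_num)
      constructor
      · simp only [auxPhi]
        exact aux_le4 (by linarith) (by linarith [sq_nonneg e])
          (by linarith) (by linarith) P1 P2 P3 P4
      · intro hne
        simp only [auxPhi]
        rcases eq_or_ne e 0 with rfl | he
        · have hd : d ≠ 1 ∧ d ≠ -1 := by
            constructor <;> intro h
            · exact hne (Or.inl ⟨h, rfl⟩)
            · exact hne (Or.inr ⟨h, by norm_num⟩)
          have h9d : (3:ℤ) ^ 2 ≤ d ^ 2 := aux_sq_le (by omega) (by norm_num)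
          exact aux_lt4₁ (by linarith) (by linarith [sq_nonneg (0:ℤ)])
            (by linarith) (by linarith) P1 P2 P3 P4
        · have h4e : (2:ℤ) ^ 2 ≤ e ^ 2 := aux_sq_le (by omega) (by norm_num)
          exact aux_lt4₂ (by linarith) (by linarith)
            (by linarith) (by linarith) P1 P2 P3 P4
    · -- δ = 1, ε = 1 : d, e odd
      have h1d : (1:ℤ) ^ 2 ≤ d ^ 2 := aux_sq_le (by omega) (by norm_num)
      have h1e : (1:ℤ) ^ 2 ≤ e ^ 2 := aux_sq_le (by omega) (by norm_num)
      have hSpos : 0 < S := by linarith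
      have hTpos : 0 < T := by linarith
      rcases eq_or_ne (d + e) 0 with hpe | hpe
      · -- e = -d : always strictly suboptimal
        have h4m : (2:ℤ) ^ 2 ≤ (d - e) ^ 2 := aux_sq_le (by omega) (by norm_num)
        have hstrict : auxPhi S T d e < auxPhi S T 1 1 := by
          have A : auxPhi S T d e ≤
              (S ^ 2 - 1) * (T ^ 2 - 1) * ((S + T) ^ 2) * ((S - T) ^ 2 - 4) := by
            simp only [auxPhi]
            exact aux_le4 (by linarith) (by linarith)
              (by linarith [sq_nonneg (d + e)]) (by linarith) P1 P2 P3 P4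
          have hq : 0 < (S ^ 2 - 1) * (T ^ 2 - 1) := by
            have a1 : 0 < S ^ 2 - 1 ^ 2 :=
              aux_sq_pos (x := S) (y := 1) (by linarith) (by linarith)
            have a2 : 0 < T ^ 2 - 1 ^ 2 :=
              aux_sq_pos (x := T) (y := 1) (by linarith) (by linarith)
            simp only [one_pow] at a1 a2
            exact mul_pos a1 a2
          have hr : 0 < 16 * S * T * ((S ^ 2 - 1) * (T ^ 2 - 1)) := by positivity
          have B : (S ^ 2 - 1) * (T ^ 2 - 1) * ((S + T) ^ 2) * ((S - T) ^ 2 - 4) <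
              auxPhi S T 1 1 := by
            have hexp : auxPhi S T 1 1 -
                (S ^ 2 - 1) * (T ^ 2 - 1) * ((S + T) ^ 2) * ((S - T) ^ 2 - 4) =
                16 * S * T * ((S ^ 2 - 1) * (T ^ 2 - 1)) := by
              simp only [auxPhi]; ring
            linarith
          exact lt_of_le_of_lt A B
        exact ⟨hstrict.le, fun _ => hstrict⟩
      · have h4p : (2:ℤ) ^ 2 ≤ (d + e) ^ 2 := aux_sq_le (by omega) (by norm_num)
        constructor
        · simp only [auxPhi]
          exact aux_le4 (by linarith) (by linarith)
            (by linarith) (by linarith [sq_nonneg (d - e)]) P1 P2 P3 P4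
        · intro hne
          simp only [auxPhi]
          rcases eq_or_ne d 1 with rfl | hd1
          · rcases eq_or_ne e 1 with rfl | he1'
            · exact absurd (Or.inl ⟨rfl, rfl⟩) hne
            · have h9e : (3:ℤ) ^ 2 ≤ e ^ 2 := aux_sq_le (by omega) (by norm_num)
              exact aux_lt4₂ (by linarith) (by linarith)
                (by linarith) (by linarith [sq_nonneg (1 - e)]) P1 P2 P3 P4
          · rcases eq_or_ne d (-1) with rfl | hdm1
            · rcases eq_or_ne e (-1) with rfl | he1'
              · exact absurd (Or.inr ⟨rfl, rfl⟩) hne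
              · have h9e : (3:ℤ) ^ 2 ≤ e ^ 2 := aux_sq_le (by omega) (by norm_num)
                exact aux_lt4₂ (by linarith) (by linarith)
                  (by linarith) (by linarith [sq_nonneg (-1 - e)]) P1 P2 P3 P4
            · have h9d : (3:ℤ) ^ 2 ≤ d ^ 2 := aux_sq_le (by omega) (by norm_num)
              exact aux_lt4₁ (by linarith) (by linarith)
                (by linarith) (by linarith [sq_nonneg (d - e)]) P1 P2 P3 P4
  refine ⟨main.1, ⟨fun heq => ?_, fun hor => ?_⟩⟩
  · by_contra hne
    exact absurd heq (ne_of_lt (main.2 hne))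
  · rcases hor with ⟨rfl, rfl⟩ | ⟨rfl, rfl⟩
    · rfl
    · simp only [auxPhi]; ring

/-- Bridging identity: the product of dimensions equals `auxPhi / 9216`. -/
lemma aux_bridge (N M a c a' c' : ℕ) (hA : a + a' = N) (hC : c + c' = M) :
    dimC2 (a, c) * dimC2 (a', c') =
      ((auxPhi ((N : ℤ) + M + 4) ((M : ℤ) + 2)
        (2 * ((a : ℤ) + c) - ((N : ℤ) + M)) (2 * (c : ℤ) - M) : ℤ) : ℚ) / 9216 := by
  subst hA hC
  simp only [dimC2, auxPhi]
  push_cast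
  ring

theorem stmt_19 (N M : ℕ)
    -- `λ = Nω₁ + Mω₂` has ε-coordinates `b₁ = N + M ≥ b₂ = M`; the maximal pair
    -- splits each ε-coordinate as evenly as possible (written back in ω-coordinates):
    (lmax₁ lmax₂ : ℕ × ℕ)
    (h₁ : lmax₁ = ((N + M + 1) / 2 - (M + 1) / 2, (M + 1) / 2))
    (h₂ : lmax₂ = ((N + M) / 2 - M / 2, M / 2)) :
    ∀ lam₁ lam₂ : ℕ × ℕ, lam₁ + lam₂ = (N, M) →
      dimC2 lam₁ * dimC2 lam₂ ≤ dimC2 lmax₁ * dimC2 lmax₂ ∧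
        (dimC2 lam₁ * dimC2 lam₂ = dimC2 lmax₁ * dimC2 lmax₂ ↔
          (lam₁ = lmax₁ ∧ lam₂ = lmax₂) ∨ (lam₁ = lmax₂ ∧ lam₂ = lmax₁)) := by
  subst h₁ h₂
  rintro ⟨a, c⟩ ⟨a', c'⟩ hsum
  rw [Prod.mk_add_mk, Prod.mk.injEq] at hsum
  obtain ⟨hA, hC⟩ := hsum
  have hb1 := aux_bridge N M a c a' c' hA hC
  have hb2 := aux_bridge N M ((N + M + 1) / 2 - (M + 1) / 2) ((M + 1) / 2)
      ((N + M) / 2 - M / 2) (M / 2) (by omega) (by omega)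
  have hd2 : 2 * (((((N + M + 1) / 2 - (M + 1) / 2 : ℕ)) : ℤ) + (((M + 1) / 2 : ℕ) : ℤ)) -
      ((N : ℤ) + M) = ((N : ℤ) + M) % 2 := by omega
  have he2 : 2 * ((((M + 1) / 2 : ℕ)) : ℤ) - (M : ℤ) = (M : ℤ) % 2 := by omega
  rw [hd2, he2] at hb2
  have hkey := aux_key ((N : ℤ) + M + 4) ((M : ℤ) + 2)
      (2 * ((a : ℤ) + c) - ((N : ℤ) + M)) (2 * (c : ℤ) - M)
      (((N : ℤ) + M) % 2) ((M : ℤ) % 2)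
      (by omega) (by omega) (by omega) (by omega) (by omega) (by omega)
      (by omega) (by omega) (by omega) (by omega)
  rw [hb1, hb2]
  constructor
  · rw [div_le_div_iff_of_pos_right (by norm_num : (0:ℚ) < 9216)]
    exact_mod_cast hkey.1
  · have hiff : ∀ x y : ℤ, ((x : ℚ) / 9216 = (y : ℚ) / 9216) ↔ x = y := by
      intro x y
      constructor
      · intro h
        field_simp at h
        exact_mod_cast h
      · intro h; rw [h]
    rw [hiff, hkey.2]
    simp only [Prod.mk.injEq]
    omega
end
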